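/- arXiv:0910.2371 — 9 statements merged into one kernel-verified Lean document; each statement's English description precedes it below -/
import Mathlib

section
/- Let p be a prime, F a field of characteristic p, and f ≥ 1. The map from 1 + πF[[π]] to itself defined by u(π) ↦ u(π^{p^f})/u(π) is surjective. -/
noncomputable section

open PowerSeries

/-- Substitution `π ↦ π^k` in a power series. -/
def psubst (F : Type) [Field F] (k : ℕ) (g : PowerSeries F) : PowerSeries F :=
  PowerSeries.mk fun n => if k ∣ n then PowerSeries.coeff (n / k) g else 0

/-- Substitution `π ↦ π^k` in a Laurent series (for `k > 0`). -/
def lsubst (F : Type) [Field F] (k : ℕ) (x : LaurentSeries F) : LaurentSeries F :=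
  if h : 0 < k then
    HahnSeries.embDomain
      (OrderEmbedding.ofStrictMono (fun n : ℤ => (k : ℤ) * n)
        (fun a b hab => mul_lt_mul_of_pos_left hab (by exact_mod_cast h))) x
  else x

/-- The monomial `π^s` in the Laurent series field. -/
def T (F : Type) [Field F] (s : ℤ) : LaurentSeries F := HahnSeries.single s 1

/-- Inclusion of power series into Laurent series. -/
def lS (F : Type) [Field F] : PowerSeries F →+* LaurentSeries F := HahnSeries.ofPowerSeries ℤ F

/-- `(1+π)^η` for `η ∈ ℤ_p`, via the binomial series, over a field of characteristic `p`. -/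
def binomSeries (F : Type) [Field F] (p : ℕ) [Fact p.Prime] [CharP F p] (η : PadicInt p) :
    PowerSeries F :=
  PowerSeries.mk fun n => ((η.appr (n + 1)).choose n : F)

/-- Composition of power series: `u(g(π))` where `g` has zero constant term. -/
def pcomp (F : Type) [Field F] (u g : PowerSeries F) : PowerSeries F :=
  PowerSeries.mk fun n =>
    ∑ k ∈ Finset.range (n + 1), PowerSeries.coeff k u * PowerSeries.coeff n (g ^ k)

/-- Action of `γ` with `χ(γ) = c ∈ ℤ_p` on Laurent series: substitution `π ↦ (1+π)^c - 1`. -/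
def act (F : Type) [Field F] (p : ℕ) [Fact p.Prime] [CharP F p] (c : PadicInt p)
    (H : LaurentSeries F) : LaurentSeries F :=
  lS F (binomSeries F p c - 1) ^ H.order *
    lS F (pcomp F H.powerSeriesPart (binomSeries F p c - 1))

/-- The `π`-adic valuation of `x` is at least `v`. -/
def valGE (F : Type) [Field F] (x : LaurentSeries F) (v : ℤ) : Prop :=
  ∀ n : ℤ, n < v → x.coeff n = 0

/-- Reduction of `c ∈ ℤ_p` mod `p`, viewed in `F`. -/
def redF (F : Type) [Field F] (p : ℕ) [Fact p.Prime] [CharP F p] (c : PadicInt p) : F :=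
  ZMod.castHom (dvd_refl p) F (PadicInt.toZMod c)

/-- Coefficients of the solution `u`, defined recursively. -/
def ucoeff (F : Type) [Field F] (v : PowerSeries F) (q : ℕ) : ℕ → F
  | 0 => 1
  | (n+1) =>
    (if h : q ∣ (n+1) ∧ 2 ≤ q then ucoeff F v q ((n+1)/q) else 0)
      - ∑ j ∈ Finset.range (n+1),
          (PowerSeries.coeff (j+1) v) * ucoeff F v q (n - j)
  decreasing_by
  · exact Nat.div_lt_self (Nat.succ_pos n) h.2
  · exact Nat.lt_succ_of_le (Nat.sub_le n j)

/-- the map `u ↦ u(π^{p^f})/u(π)` is surjective on `1 + πF[[π]]`. -/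
theorem stmt_0 (p : ℕ) [Fact p.Prime] (F : Type) [Field F] [CharP F p] (f : ℕ) (hf : 1 ≤ f)
    (v : PowerSeries F) (hv : PowerSeries.constantCoeff v = 1) :
    ∃ u : PowerSeries F, PowerSeries.constantCoeff u = 1 ∧ psubst F (p ^ f) u = v * u := by
  set q := p ^ f with hq
  have hp2 : 2 ≤ p := (Fact.out : p.Prime).two_le
  have hq2 : 2 ≤ q := by
    calc 2 ≤ p := hp2
    _ = p ^ 1 := (pow_one p).symm
    _ ≤ p ^ f := Nat.pow_le_pow_right (by omega) hf
  refine ⟨PowerSeries.mk (ucoeff F v q), ?_, ?_⟩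
  · simp [PowerSeries.constantCoeff_mk, ucoeff]
  · ext n
    rw [PowerSeries.coeff_mul, Finset.Nat.sum_antidiagonal_eq_sum_range_succ_mk]
    simp only [psubst, PowerSeries.coeff_mk]
    cases n with
    | zero =>
      simp only [Finset.sum_range_one, PowerSeries.coeff_mk, dvd_zero, if_true,
        Nat.zero_div, Nat.zero_sub, Nat.sub_zero]
      simp only [ucoeff]
      rw [PowerSeries.coeff_zero_eq_constantCoeff, hv, one_mul]
    | succ m =>
      rw [Finset.sum_range_succ']
      have h0 : PowerSeries.coeff 0 v = 1 := by
        rw [PowerSeries.coeff_zero_eq_constantCoeff]; exact hv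
      have hrec : ucoeff F v q (m+1) =
          (if h : q ∣ (m+1) ∧ 2 ≤ q then ucoeff F v q ((m+1)/q) else 0)
            - ∑ j ∈ Finset.range (m+1),
                (PowerSeries.coeff (j+1) v) * ucoeff F v q (m - j) := by
        rw [ucoeff]
      have hsum : ∀ j ∈ Finset.range (m+1),
          PowerSeries.coeff (j+1) v * ucoeff F v q (m + 1 - (j+1))
            = PowerSeries.coeff (j+1) v * ucoeff F v q (m - j) := by
        intro j hj
        rw [Nat.succ_sub_succ]
      rw [Finset.sum_congr rfl hsum, Nat.sub_zero, h0, one_mul, hrec]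
      by_cases hd : q ∣ (m+1)
      · rw [dif_pos ⟨hd, hq2⟩, if_pos hd]
        ring
      · rw [dif_neg (by tauto), if_neg hd]
        ring
end
end

section
/- Let p > 2 be prime, f ≥ 1, S = ℤ/fℤ, and c = (c_0,…,c_{f−1}) with 0 < c_i < p−1 for all i. Let J ⊆ S be nonempty with J ≠ S or c ≠ (p−2,…,p−2). Then the congruence Σ_{i=0}^{f−1} c_i p^i ≡ Σ_{j∉J} b_j p^j − Σ_{i∈J} a_i p^i mod p^f−1 has a unique solution with integers 1 ≤ a_i, b_j ≤ p (for i ∈ J, j ∉ J). Moreover, in this solution all a_i ≤ p−1 and all b_j ≤ p−1, unless c = (1,…,1), J = ∅ (excluded here) or c = (p−2,…,p−2) and J = S (excluded here). -/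
noncomputable section

open PowerSeries

/-- A solution of the congruence `n ≡ Σ_{j∉J} b_j p^j - Σ_{i∈J} a_i p^i mod p^f - 1`
with `1 ≤ a_i, b_j ≤ p`. -/
def IsSol (p f : ℕ) (J : Finset (Fin f)) (n : ℤ) (a b : Fin f → ℤ) : Prop :=
  (∀ i ∈ J, 1 ≤ a i ∧ a i ≤ (p : ℤ)) ∧ (∀ j ∈ Jᶜ, 1 ≤ b j ∧ b j ≤ (p : ℤ)) ∧
    n ≡ (∑ j ∈ Jᶜ, b j * (p : ℤ) ^ (j : ℕ)) - ∑ i ∈ J, a i * (p : ℤ) ^ (i : ℕ)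
      [ZMOD ((p : ℤ) ^ f - 1)]



lemma modEq_sum {ι : Type*} (s : Finset ι) (g h : ι → ℤ) (n : ℤ)
    (H : ∀ i ∈ s, g i ≡ h i [ZMOD n]) :
    (∑ i ∈ s, g i) ≡ (∑ i ∈ s, h i) [ZMOD n] := by
  classical
  induction s using Finset.induction with
  | empty => simp [Int.ModEq.refl]
  | @insert a s' hx ih =>
    rw [Finset.sum_insert hx, Finset.sum_insert hx]
    exact (H a (Finset.mem_insert_self a s')).add (ih fun i hi => H i (Finset.mem_insert_of_mem hi))

lemma pow_modEq (p : ℤ) (f a : ℕ) : (p:ℤ)^a ≡ p ^ (a % f) [ZMOD p^f - 1] := by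
  conv_lhs => rw [← Nat.div_add_mod a f, pow_add, pow_mul]
  have h1 : (p^f : ℤ) ≡ 1 [ZMOD p^f - 1] := by
    have : (p^f - 1 : ℤ) ∣ (p^f - 1) := dvd_refl _
    exact (Int.modEq_iff_dvd.2 (by simp)).symm
  exact ((h1.pow (a / f)).mul_right _).trans (by rw [one_pow, one_mul])

lemma digits_eq_zero (p : ℤ) (hp : 0 < p) :
    ∀ (n : ℕ) (e : Fin n → ℤ), (∀ i, |e i| < p) →
      (∑ i, e i * p ^ (i : ℕ)) = 0 → ∀ i, e i = 0 := by
  intro n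
  induction n with
  | zero => exact fun e _ _ i => absurd i.2 (by omega)
  | succ n ih =>
    intro e he hs
    rw [Fin.sum_univ_succ] at hs
    have hrw : ∑ i : Fin n, e i.succ * p ^ ((i.succ : Fin (n+1)) : ℕ)
        = p * ∑ i : Fin n, e i.succ * p ^ (i : ℕ) := by
      rw [Finset.mul_sum]
      refine Finset.sum_congr rfl fun i _ => ?_
      rw [Fin.val_succ, pow_succ]
      ring
    rw [hrw] at hs
    simp only [Fin.val_zero, pow_zero, mul_one] at hs
    have h0 : e 0 = 0 :=
      Int.eq_zero_of_abs_lt_dvd ⟨-∑ i : Fin n, e i.succ * p ^ (i : ℕ), by linarith⟩ (he 0)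
    have hS : ∑ i : Fin n, e i.succ * p ^ (i : ℕ) = 0 := by
      rw [h0, zero_add] at hs
      exact (mul_eq_zero.1 hs).resolve_left (by omega)
    have := ih (fun i => e i.succ) (fun i => he i.succ) hS
    exact fun i => Fin.cases h0 (fun j => this j) i


/-- in the generic case the congruence has a unique solution, with all
entries at most p - 1. -/
theorem stmt_4 (p f : ℕ) (hp : p.Prime) (hp2 : 2 < p) (hf : 1 ≤ f) (c : Fin f → ℤ)
    (hc : ∀ i, 0 < c i ∧ c i < (p : ℤ) - 1) (J : Finset (Fin f)) (hJ : J.Nonempty)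
    (hJc : ¬ (J = Finset.univ ∧ ∀ i, c i = (p : ℤ) - 2)) :
    ∃ a b : Fin f → ℤ, IsSol p f J (∑ i, c i * (p : ℤ) ^ (i : ℕ)) a b ∧
      (∀ i ∈ J, a i ≤ (p : ℤ) - 1) ∧ (∀ j ∈ Jᶜ, b j ≤ (p : ℤ) - 1) ∧
      ∀ a' b' : Fin f → ℤ, IsSol p f J (∑ i, c i * (p : ℤ) ^ (i : ℕ)) a' b' →
        (∀ i ∈ J, a' i = a i) ∧ ∀ j ∈ Jᶜ, b' j = b j := by
    classical
  haveI : NeZero f := ⟨by omega⟩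
  set q : ℤ := (p : ℤ) with hq
  have hq3 : 3 ≤ q := by
    have : (2:ℤ) < p := by exact_mod_cast hp2
    omega
  set M : ℤ := q ^ f - 1 with hM
  have hqf : q ≤ q ^ f := le_self_pow₀ (by omega) (by omega)
  have hM0 : 0 < M := by rw [hM]; linarith
  set ε : Fin f → ℤ := fun k => if (k - 1 : Fin f) ∈ J then 1 else 0 with hε
  have hε01 : ∀ k, ε k = 0 ∨ ε k = 1 := by
    intro k; simp only [hε]; split <;> simp
  set a : Fin f → ℤ := fun i => q - c i - ε i with ha
  set b : Fin f → ℤ := fun j => c j + ε j with hb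
  have hab : ∀ i, 1 ≤ a i ∧ a i ≤ q - 1 ∧ 1 ≤ b i ∧ b i ≤ q - 1 := by
    intro i
    rcases hc i with ⟨h1, h2⟩
    rcases hε01 i with h | h <;> simp only [ha, hb, h] <;> omega
  -- key congruence : ∑ ε k q^k ≡ q * ∑_{i ∈ J} q^i  [ZMOD M]
  have hstepA : (∑ k, ε k * q ^ (k : ℕ)) = ∑ i ∈ J, q ^ (((i + 1 : Fin f)) : ℕ) := by
    rw [← Equiv.sum_comp (Equiv.addRight (1 : Fin f)) (fun k => ε k * q ^ (k : ℕ))]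
    simp only [Equiv.coe_addRight, hε, add_sub_cancel_right, ite_mul, one_mul, zero_mul]
    rw [Finset.sum_ite_mem, Finset.univ_inter]
  have hvala : ∀ i : Fin f, ((i + 1 : Fin f) : ℕ) = ((i : ℕ) + 1) % f := by
    intro i
    rw [Fin.val_add, Fin.val_one']
    simp [Nat.add_mod]
  have hstepB : (∑ i ∈ J, q ^ (((i + 1 : Fin f)) : ℕ)) ≡ q * ∑ i ∈ J, q ^ (i : ℕ) [ZMOD M] := by
    rw [Finset.mul_sum]
    refine modEq_sum J _ _ M fun i _ => ?_
    rw [hvala i]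
    have := (pow_modEq q f ((i : ℕ) + 1)).symm
    calc q ^ (((i : ℕ) + 1) % f) ≡ q ^ ((i : ℕ) + 1) [ZMOD M] := this
      _ = q * q ^ (i : ℕ) := by rw [pow_succ]; ring
  have hkey : (∑ k, ε k * q ^ (k : ℕ)) ≡ q * ∑ i ∈ J, q ^ (i : ℕ) [ZMOD M] :=
    hstepA ▸ hstepB
  -- the defining sum identity
  have hsum_eq : (∑ j ∈ Jᶜ, b j * q ^ (j : ℕ)) - ∑ i ∈ J, a i * q ^ (i : ℕ)
      = (∑ i, c i * q ^ (i : ℕ)) +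
        ((∑ k, ε k * q ^ (k : ℕ)) - q * ∑ i ∈ J, q ^ (i : ℕ)) := by
    rw [← Finset.sum_add_sum_compl J (fun i => c i * q ^ (i : ℕ)),
      ← Finset.sum_add_sum_compl J (fun k => ε k * q ^ (k : ℕ)), Finset.mul_sum]
    have h1 : ∑ j ∈ Jᶜ, b j * q ^ (j : ℕ)
        = ∑ j ∈ Jᶜ, c j * q ^ (j : ℕ) + ∑ j ∈ Jᶜ, ε j * q ^ (j : ℕ) := by
      rw [← Finset.sum_add_distrib]
      exact Finset.sum_congr rfl fun i _ => by simp only [hb]; ring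
    have h2 : ∑ i ∈ J, a i * q ^ (i : ℕ)
        = ∑ i ∈ J, q * q ^ (i : ℕ) - ∑ i ∈ J, c i * q ^ (i : ℕ)
          - ∑ i ∈ J, ε i * q ^ (i : ℕ) := by
      rw [← Finset.sum_sub_distrib, ← Finset.sum_sub_distrib]
      exact Finset.sum_congr rfl fun i _ => by simp only [ha]; ring
    rw [h1, h2]; ring
  have hsol : IsSol p f J (∑ i, c i * (p : ℤ) ^ (i : ℕ)) a b := by
    refine ⟨fun i _ => ⟨(hab i).1, by have := (hab i).2.1; omega⟩,
      fun j _ => ⟨(hab j).2.2.1, by have := (hab j).2.2.2; omega⟩, ?_⟩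
    rw [hsum_eq]
    have h0 : (0 : ℤ) ≡ (∑ k, ε k * q ^ (k : ℕ)) - q * ∑ i ∈ J, q ^ (i : ℕ) [ZMOD M] := by
      have := hkey.sub (Int.ModEq.refl (q * ∑ i ∈ J, q ^ (i : ℕ)))
      simpa using this.symm
    have := (Int.ModEq.refl (∑ i, c i * q ^ (i : ℕ))).add h0
    simpa [← hq, ← hM] using this
  refine ⟨a, b, hsol, fun i _ => (hab i).2.1, fun j _ => (hab j).2.2.2, ?_⟩
  -- uniqueness
  intro a' b' hsol'
  set e : Fin f → ℤ := fun i => if i ∈ J then a' i - a i else b i - b' i with he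
  have he_abs : ∀ i, |e i| ≤ q - 1 := by
    intro i
    by_cases hi : i ∈ J
    · have h1 := hsol'.1 i hi
      have h2 := (hab i).1
      have h3 := (hab i).2.1
      simp only [he, if_pos hi]
      rw [abs_le]; omega
    · have h1 := hsol'.2.1 i (Finset.mem_compl.2 hi)
      have h2 := (hab i).2.2.1
      have h3 := (hab i).2.2.2
      simp only [he, if_neg hi]
      rw [abs_le]; omega
  have hesplit : (∑ i, e i * q ^ (i : ℕ))
      = ((∑ j ∈ Jᶜ, b j * q ^ (j : ℕ)) - ∑ i ∈ J, a i * q ^ (i : ℕ))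
        - ((∑ j ∈ Jᶜ, b' j * q ^ (j : ℕ)) - ∑ i ∈ J, a' i * q ^ (i : ℕ)) := by
    rw [← Finset.sum_add_sum_compl J (fun i => e i * q ^ (i : ℕ))]
    have h1 : ∑ i ∈ J, e i * q ^ (i : ℕ)
        = ∑ i ∈ J, a' i * q ^ (i : ℕ) - ∑ i ∈ J, a i * q ^ (i : ℕ) := by
      rw [← Finset.sum_sub_distrib]
      refine Finset.sum_congr rfl fun i hi => by simp only [he, if_pos hi]; ring
    have h2 : ∑ i ∈ Jᶜ, e i * q ^ (i : ℕ)
        = ∑ j ∈ Jᶜ, b j * q ^ (j : ℕ) - ∑ j ∈ Jᶜ, b' j * q ^ (j : ℕ) := by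
      rw [← Finset.sum_sub_distrib]
      refine Finset.sum_congr rfl fun i hi => by
        simp only [he, if_neg (Finset.mem_compl.1 hi)]; ring
    rw [h1, h2]; ring
  have hcong : (∑ i, e i * q ^ (i : ℕ)) ≡ 0 [ZMOD M] := by
    rw [hesplit]
    have h := hsol.2.2.symm.trans hsol'.2.2
    simpa [← hq, ← hM] using h.sub (Int.ModEq.refl ((∑ j ∈ Jᶜ, b' j * q ^ (j : ℕ)) - ∑ i ∈ J, a' i * q ^ (i : ℕ)))
  have hgeom : (q - 1) * ∑ i : Fin f, q ^ (i : ℕ) = M := by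
    rw [Fin.sum_univ_eq_sum_range (fun i => q ^ i) f, mul_geom_sum]
  have hbound : |∑ i, e i * q ^ (i : ℕ)| ≤ M := by
    calc |∑ i, e i * q ^ (i : ℕ)| ≤ ∑ i, |e i * q ^ (i : ℕ)| :=
          Finset.abs_sum_le_sum_abs _ _
      _ ≤ ∑ i : Fin f, (q - 1) * q ^ (i : ℕ) := by
          refine Finset.sum_le_sum fun i _ => ?_
          rw [abs_mul, abs_pow, abs_of_nonneg (by omega : (0:ℤ) ≤ q)]
          exact mul_le_mul_of_nonneg_right (he_abs i) (pow_nonneg (by omega) _)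
      _ = M := by rw [← Finset.mul_sum]; exact hgeom
  have hdvd : M ∣ ∑ i, e i * q ^ (i : ℕ) := (Int.modEq_zero_iff_dvd).1 hcong
  obtain ⟨k, hk⟩ := hdvd
  have hk1 : k = -1 ∨ k = 0 ∨ k = 1 := by
    rw [hk, abs_mul, abs_of_pos hM0] at hbound
    have : |k| ≤ 1 := by
      nlinarith [abs_nonneg k]
    rw [abs_le] at this; omega
  have hconc : (∀ i, e i = 0) →
      (∀ i ∈ J, a' i = a i) ∧ ∀ j ∈ Jᶜ, b' j = b j := by
    intro h0
    constructor
    · intro i hi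
      have := h0 i
      simp only [he, if_pos hi] at this
      omega
    · intro j hj
      have := h0 j
      simp only [he, if_neg (Finset.mem_compl.1 hj)] at this
      omega
  rcases hk1 with hk1 | hk1 | hk1
  · -- sum = -M : all e i = -(q-1), contradiction using J nonempty
    exfalso
    have hall : ∀ i, e i = -(q - 1) := by
      have hzero : ∑ i, ((q - 1) + e i) * q ^ (i : ℕ) = 0 := by
        have : ∑ i, ((q - 1) + e i) * q ^ (i : ℕ)
            = (q - 1) * ∑ i : Fin f, q ^ (i : ℕ) + ∑ i, e i * q ^ (i : ℕ) := by
          rw [Finset.mul_sum, ← Finset.sum_add_distrib]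
          exact Finset.sum_congr rfl fun i _ => by ring
        rw [this, hgeom, hk, hk1]; ring
      intro i
      have := (Finset.sum_eq_zero_iff_of_nonneg (fun i _ =>
        mul_nonneg (by have := he_abs i; rw [abs_le] at this; omega)
          (pow_nonneg (by omega : (0:ℤ) ≤ q) _))).1 hzero i (Finset.mem_univ i)
      have hq0 : q ^ (i : ℕ) ≠ 0 := pow_ne_zero _ (by omega)
      have := (mul_eq_zero.1 this).resolve_right hq0
      omega
    obtain ⟨i, hi⟩ := hJ
    have h1 := hall i
    simp only [he, if_pos hi] at h1
    have h2 := hsol'.1 i hi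
    have h3 := (hab i).2.1
    omega
  · exact hconc (digits_eq_zero q (by omega) f e
      (fun i => lt_of_le_of_lt (he_abs i) (by omega)) (by rw [hk, hk1]; ring))
  · -- sum = M : all e i = q-1
    exfalso
    have hall : ∀ i, e i = q - 1 := by
      have hzero : ∑ i, ((q - 1) - e i) * q ^ (i : ℕ) = 0 := by
        have : ∑ i, ((q - 1) - e i) * q ^ (i : ℕ)
            = (q - 1) * ∑ i : Fin f, q ^ (i : ℕ) - ∑ i, e i * q ^ (i : ℕ) := by
          rw [Finset.mul_sum, ← Finset.sum_sub_distrib]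
          exact Finset.sum_congr rfl fun i _ => by ring
        rw [this, hgeom, hk, hk1]; ring
      intro i
      have := (Finset.sum_eq_zero_iff_of_nonneg (fun i _ =>
        mul_nonneg (by have := he_abs i; rw [abs_le] at this; omega)
          (pow_nonneg (by omega : (0:ℤ) ≤ q) _))).1 hzero i (Finset.mem_univ i)
      have hq0 : q ^ (i : ℕ) ≠ 0 := pow_ne_zero _ (by omega)
      have := (mul_eq_zero.1 this).resolve_right hq0
      omega
    by_cases hJu : J = Finset.univ
    · refine hJc ⟨hJu, fun i => ?_⟩
      have hi : i ∈ J := hJu ▸ Finset.mem_univ i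
      have h1 := hall i
      simp only [he, if_pos hi] at h1
      have h2 := hsol'.1 i hi
      have h3 := (hab i).1
      have h4 : ε i = 1 := by
        simp only [hε, if_pos (hJu ▸ Finset.mem_univ (i - 1))]
      have h5 : a i = q - c i - ε i := rfl
      omega
    · obtain ⟨j, hj⟩ : ∃ j, j ∉ J := by
        by_contra h
        push_neg at h
        exact hJu (Finset.eq_univ_iff_forall.2 h)
      have h1 := hall j
      simp only [he, if_neg hj] at h1
      have h2 := hsol'.2.1 j (Finset.mem_compl.2 hj)
      have h3 := (hab j).2.2.2
      omega
end
end

section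
/- Let p > 2 be prime, f ≥ 1, and c = (c_0,…,c_{f−1}) with 0 < c_i < p−1 for all i. Suppose J ⊆ S = ℤ/fℤ and integers a_i, b_j ∈ [1,p] (i ∈ J, j ∉ J) satisfy Σ b_j p^j − Σ a_i p^i ≡ Σ c_i p^i mod p^f−1. If some b_j = p, then c = (1,…,1), J = ∅ and all b_j = p; if some a_i = p, then c = (p−2,…,p−2), J = S and all a_i = p. -/
noncomputable section

open PowerSeries

lemma carry_exists (P : ℤ) (f : ℕ) (hP : 3 ≤ P) (e : ℕ → ℤ)
    (hz : ∀ i, f ≤ i → e i = 0)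
    (hbd : ∀ i, |e i| ≤ 2 * P - 2)
    (hsum : ∑ i ∈ Finset.range f, e i * P ^ i = 0) (j : ℕ) :
    ∃ ε δ : ℤ, |ε| ≤ 1 ∧ |δ| ≤ 1 ∧ P * δ = ε + e j ∧
      ((∀ i, e i ≤ P - 1) → ε ≤ 0 ∧ δ ≤ 0) ∧
      ((∀ i, 1 - P ≤ e i) → 0 ≤ ε ∧ 0 ≤ δ) := by
  set S : ℕ → ℤ := fun m => ∑ i ∈ Finset.range m, e i * P ^ i with hS
  have hPpos : (0:ℤ) < P := by linarith
  have hPm : ∀ m : ℕ, (0:ℤ) < P ^ m := fun m => pow_pos hPpos m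
  -- divisibility
  have hdvd : ∀ m, P ^ m ∣ S m := by
    intro m
    rcases le_or_gt m f with h | h
    · have hsplit : S m + ∑ i ∈ Finset.Ico m f, e i * P ^ i = 0 := by
        rw [hS]; rw [Finset.sum_range_add_sum_Ico _ h]; exact hsum
      have : S m = - ∑ i ∈ Finset.Ico m f, e i * P ^ i := by linarith
      rw [this, dvd_neg]
      refine Finset.dvd_sum fun i hi => ?_
      exact (pow_dvd_pow P (Finset.mem_Ico.1 hi).1).mul_left _
    · have h0 : ∑ i ∈ Finset.Ico f m, e i * P ^ i = 0 := by
        refine Finset.sum_eq_zero fun i hi => ?_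
        rw [hz i (Finset.mem_Ico.1 hi).1, zero_mul]
      have hsplit : (∑ i ∈ Finset.range f, e i * P ^ i)
          + ∑ i ∈ Finset.Ico f m, e i * P ^ i = S m :=
        Finset.sum_range_add_sum_Ico (fun i => e i * P ^ i) h.le
      have : S m = 0 := by rw [← hsplit, hsum, h0]; ring
      rw [this]; exact dvd_zero _
  set ε : ℕ → ℤ := fun m => S m / P ^ m with hε
  have hmul : ∀ m, P ^ m * ε m = S m := fun m => Int.mul_ediv_cancel' (hdvd m)
  -- bound on S
  have hSbd : ∀ m, |S m| ≤ 2 * P ^ m - 2 := by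
    intro m
    have h1 : |S m| ≤ ∑ i ∈ Finset.range m, |e i * P ^ i| := Finset.abs_sum_le_sum_abs _ _
    have h2 : ∑ i ∈ Finset.range m, |e i * P ^ i| ≤ ∑ i ∈ Finset.range m, (2*P-2) * P ^ i := by
      refine Finset.sum_le_sum fun i _ => ?_
      rw [abs_mul, abs_pow, abs_of_pos hPpos]
      exact mul_le_mul_of_nonneg_right (hbd i) (pow_nonneg hPpos.le i)
    have h3 : (∑ i ∈ Finset.range m, P ^ i) * (P - 1) = P ^ m - 1 := geom_sum_mul P m
    have h4 : ∑ i ∈ Finset.range m, (2*P-2) * P ^ i = (2*P-2) * ∑ i ∈ Finset.range m, P ^ i := by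
      rw [Finset.mul_sum]
    nlinarith [h1, h2]
  have habs : ∀ m, |ε m| ≤ 1 := by
    intro m
    have h1 : P ^ m * |ε m| = |S m| := by
      rw [← abs_of_pos (hPm m), ← abs_mul, hmul]
    have h2 : P ^ m * |ε m| < P ^ m * 2 := by
      rw [h1]; have := hSbd m; linarith
    have := lt_of_mul_lt_mul_left h2 (hPm m).le
    omega
  have hrec : ∀ m, P * ε (m + 1) = ε m + e m := by
    intro m
    have h1 : S (m + 1) = S m + e m * P ^ m := Finset.sum_range_succ _ m
    have h2 : P ^ m * (P * ε (m+1)) = P ^ m * (ε m + e m) := by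
      have := hmul (m+1); have := hmul m
      rw [pow_succ] at *
      nlinarith [hmul (m+1), hmul m, h1]
    exact mul_left_cancel₀ (hPm m).ne' h2
  have hε0 : ε 0 = 0 := by
    have := hmul 0
    simp [hS] at this
    simpa using this
  have hle : (∀ i, e i ≤ P - 1) → ∀ m, ε m ≤ 0 := by
    intro h m
    induction m with
    | zero => rw [hε0]
    | succ m ih =>
      have h1 := hrec m
      have h2 : P * ε (m+1) < P * 1 := by rw [h1]; have := h m; linarith
      have := lt_of_mul_lt_mul_left h2 hPpos.le
      omega
  have hge : (∀ i, 1 - P ≤ e i) → ∀ m, 0 ≤ ε m := by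
    intro h m
    induction m with
    | zero => rw [hε0]
    | succ m ih =>
      have h1 := hrec m
      have h2 : P * (-1) < P * ε (m+1) := by rw [h1]; have := h m; linarith
      have := lt_of_mul_lt_mul_left h2 hPpos.le
      omega
  exact ⟨ε j, ε (j+1), habs j, habs (j+1), hrec j,
    fun h => ⟨hle h j, hle h (j+1)⟩, fun h => ⟨hge h j, hge h (j+1)⟩⟩

set_option maxHeartbeats 1600000 in
/-- in the generic case, a solution with some b_j = p (resp. a_i = p) forces
c = (1,…,1), J = ∅ (resp. c = (p-2,…,p-2), J = S). -/
theorem stmt_5 (p f : ℕ) (hp : p.Prime) (hp2 : 2 < p) (hf : 1 ≤ f) (c : Fin f → ℤ)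
    (hc : ∀ i, 0 < c i ∧ c i < (p : ℤ) - 1) (J : Finset (Fin f)) (a b : Fin f → ℤ)
    (hsol : IsSol p f J (∑ i, c i * (p : ℤ) ^ (i : ℕ)) a b) :
    ((∃ j ∈ Jᶜ, b j = (p : ℤ)) →
      (∀ i, c i = 1) ∧ J = ∅ ∧ ∀ j ∈ Jᶜ, b j = (p : ℤ)) ∧
    ((∃ i ∈ J, a i = (p : ℤ)) →
      (∀ i, c i = (p : ℤ) - 2) ∧ J = Finset.univ ∧ ∀ i ∈ J, a i = (p : ℤ)) := by
  obtain ⟨ha, hb, hmod⟩ := hsol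
  set P : ℤ := (p : ℤ) with hPdef
  have hP : 3 ≤ P := by rw [hPdef]; exact_mod_cast hp2
  have hPpos : (0:ℤ) < P := by linarith
  set x : Fin f → ℤ := fun i => if i ∈ J then -a i else b i with hxdef
  have hxJ : ∀ i ∈ J, x i = -a i := fun i hi => if_pos hi
  have hxJc : ∀ i ∈ Jᶜ, x i = b i := fun i hi => if_neg (Finset.mem_compl.1 hi)
  have hdub : ∀ i, x i - c i ≤ P - 1 := by
    intro i
    by_cases hi : i ∈ J
    · have h1 := (ha i hi).1; have h2 := (hc i).1
      rw [hxJ i hi]; linarith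
    · have h1 := (hb i (Finset.mem_compl.2 hi)).2; have h2 := (hc i).1
      rw [hxJc i (Finset.mem_compl.2 hi)]; linarith
  have hdlb : ∀ i, 2 - 2*P ≤ x i - c i := by
    intro i
    by_cases hi : i ∈ J
    · have h1 := (ha i hi).2; have h2 := (hc i).2
      rw [hxJ i hi]; linarith
    · have h1 := (hb i (Finset.mem_compl.2 hi)).1; have h2 := (hc i).2
      rw [hxJc i (Finset.mem_compl.2 hi)]; linarith
  set L : ℤ := ∑ i : Fin f, P ^ (i : ℕ) with hLdef
  set Q : ℤ := P ^ f - 1 with hQdef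
  have hL : L * (P - 1) = Q := by
    rw [hLdef, Fin.sum_univ_eq_sum_range (fun n => P ^ n) f]
    exact geom_sum_mul P f
  have hQpos : (0:ℤ) < Q := by
    have : P ≤ P ^ f := le_self_pow₀ (by linarith) (by omega)
    rw [hQdef]; linarith
  have hM : ∑ i, x i * P ^ (i:ℕ)
      = (∑ j ∈ Jᶜ, b j * P ^ (j:ℕ)) - ∑ i ∈ J, a i * P ^ (i:ℕ) := by
    rw [← Finset.sum_add_sum_compl J (fun i => x i * P ^ (i:ℕ))]
    have e1 : ∑ i ∈ J, x i * P ^ (i:ℕ) = - ∑ i ∈ J, a i * P ^ (i:ℕ) := by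
      rw [← Finset.sum_neg_distrib]
      exact Finset.sum_congr rfl fun i hi => by rw [hxJ i hi]; ring
    have e2 : ∑ i ∈ Jᶜ, x i * P ^ (i:ℕ) = ∑ i ∈ Jᶜ, b i * P ^ (i:ℕ) :=
      Finset.sum_congr rfl fun i hi => by rw [hxJc i hi]
    rw [e1, e2]; ring
  obtain ⟨k, hk0⟩ : Q ∣ (∑ i, x i * P ^ (i:ℕ)) - ∑ i, c i * P ^ (i:ℕ) := by
    rw [hM]; exact hmod.dvd
  have hk : ∑ i, (x i - c i) * P ^ (i:ℕ) = Q * k := by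
    have : ∑ i, (x i - c i) * P ^ (i:ℕ)
        = (∑ i, x i * P ^ (i:ℕ)) - ∑ i, c i * P ^ (i:ℕ) := by
      rw [← Finset.sum_sub_distrib]
      exact Finset.sum_congr rfl fun i _ => by ring
    rw [this, hk0]
  -- bounds on k
  have hub : Q * k ≤ Q * 1 := by
    have h1 : ∑ i, (x i - c i) * P ^ (i:ℕ) ≤ ∑ i : Fin f, (P - 1) * P ^ (i:ℕ) :=
      Finset.sum_le_sum fun i _ =>
        mul_le_mul_of_nonneg_right (hdub i) (pow_nonneg hPpos.le _)
    have h2 : ∑ i : Fin f, (P - 1) * P ^ (i:ℕ) = (P - 1) * L := by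
      rw [hLdef, Finset.mul_sum]
    rw [← hk]; rw [h2] at h1; linarith
  have hlb : Q * (-2) ≤ Q * k := by
    have h1 : ∑ i : Fin f, (2 - 2*P) * P ^ (i:ℕ) ≤ ∑ i, (x i - c i) * P ^ (i:ℕ) :=
      Finset.sum_le_sum fun i _ =>
        mul_le_mul_of_nonneg_right (hdlb i) (pow_nonneg hPpos.le _)
    have h2 : ∑ i : Fin f, (2 - 2*P) * P ^ (i:ℕ) = (2 - 2*P) * L := by
      rw [hLdef, Finset.mul_sum]
    rw [← hk]; rw [h2] at h1; nlinarith
  have hk1 : k ≤ 1 := le_of_mul_le_mul_left hub hQpos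
  have hk2 : -2 ≤ k := le_of_mul_le_mul_left hlb hQpos
  interval_cases k
  -- k = -2
  · have hzero : ∑ i : Fin f, ((x i - c i) - (2 - 2*P)) * P ^ (i:ℕ) = 0 := by
      have hsplit : ∑ i : Fin f, ((x i - c i) - (2 - 2*P)) * P ^ (i:ℕ)
          = (∑ i, (x i - c i) * P ^ (i:ℕ)) - ∑ i : Fin f, (2 - 2*P) * P ^ (i:ℕ) := by
        rw [← Finset.sum_sub_distrib]
        exact Finset.sum_congr rfl fun i _ => by ring
      have h2 : ∑ i : Fin f, (2 - 2*P) * P ^ (i:ℕ) = (2 - 2*P) * L := by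
        rw [hLdef, Finset.mul_sum]
      rw [hsplit, h2, hk]; nlinarith
    have hall : ∀ i : Fin f, x i - c i = 2 - 2*P := by
      intro i
      have := (Finset.sum_eq_zero_iff_of_nonneg (fun i _ =>
        mul_nonneg (by linarith [hdlb i]) (pow_nonneg hPpos.le _))).1 hzero i
        (Finset.mem_univ i)
      have hne : P ^ (i:ℕ) ≠ 0 := (pow_pos hPpos _).ne'
      rcases mul_eq_zero.1 this with h | h
      · linarith
      · exact absurd h hne
    have hJuniv : J = Finset.univ := by
      refine Finset.eq_univ_iff_forall.2 fun i => ?_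
      by_contra hi
      have h1 := (hb i (Finset.mem_compl.2 hi)).1
      have h2 := (hc i).2
      have h3 := hall i
      rw [hxJc i (Finset.mem_compl.2 hi)] at h3
      linarith
    have hca : ∀ i : Fin f, c i = P - 2 ∧ a i = P := by
      intro i
      have hiJ : i ∈ J := hJuniv ▸ Finset.mem_univ i
      have h3 := hall i
      rw [hxJ i hiJ] at h3
      have h1 := (ha i hiJ).2
      have h2 := (hc i).2
      constructor <;> linarith
    constructor
    · rintro ⟨j, hj, -⟩
      rw [hJuniv, Finset.compl_univ] at hj
      exact absurd hj (Finset.notMem_empty j)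
    · exact fun _ => ⟨fun i => (hca i).1, hJuniv, fun i _ => (hca i).2⟩
  -- k = -1
  · have hE : ∀ n : ℕ, True := fun _ => trivial
    set e : ℕ → ℤ := fun n => if h : n < f then x ⟨n, h⟩ - c ⟨n, h⟩ + (P - 1) else 0
      with hedef
    have hz : ∀ i, f ≤ i → e i = 0 := fun i hi => dif_neg (by omega)
    have hefin : ∀ i : Fin f, e (i : ℕ) = x i - c i + (P - 1) := by
      intro i; simp only [hedef, i.isLt, dif_pos, Fin.eta]
    have hbd : ∀ i, |e i| ≤ 2 * P - 2 := by
      intro i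
      by_cases h : i < f
      · have := hdub ⟨i, h⟩; have := hdlb ⟨i, h⟩
        rw [hedef]; simp only [dif_pos h]
        rw [abs_le]; constructor <;> linarith
      · rw [hz i (by omega)]; simp; linarith
    have hsum : ∑ i ∈ Finset.range f, e i * P ^ i = 0 := by
      rw [← Fin.sum_univ_eq_sum_range (fun n => e n * P ^ n) f]
      have : ∑ i : Fin f, e (i:ℕ) * P ^ (i:ℕ)
          = (∑ i, (x i - c i) * P ^ (i:ℕ)) + ∑ i : Fin f, (P - 1) * P ^ (i:ℕ) := by
        rw [← Finset.sum_add_distrib]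
        exact Finset.sum_congr rfl fun i _ => by rw [hefin i]; ring
      rw [this, hk]
      have h2 : ∑ i : Fin f, (P - 1) * P ^ (i:ℕ) = (P - 1) * L := by
        rw [hLdef, Finset.mul_sum]
      rw [h2]; nlinarith
    have hge : ∀ i, 1 - P ≤ e i := by
      intro i
      by_cases h : i < f
      · have := hdlb ⟨i, h⟩
        rw [hedef]; simp only [dif_pos h]; linarith
      · rw [hz i (by omega)]; linarith
    constructor
    · rintro ⟨j, hjc, hbj⟩
      exfalso
      obtain ⟨ε, δ, hε, hδ, hrec, -, hsgn⟩ := carry_exists P f hP e hz hbd hsum (j:ℕ)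
      obtain ⟨hε0, hδ0⟩ := hsgn hge
      have hej : e (j:ℕ) = 2*P - 1 - c j := by
        rw [hefin j, hxJc j hjc, hbj]; ring
      have hcj := (hc j).2
      have hδ1 := (abs_le.1 hδ).2
      have hh : P * δ ≤ P * 1 := mul_le_mul_of_nonneg_left hδ1 hPpos.le
      linarith
    · rintro ⟨i, hi, hai⟩
      exfalso
      obtain ⟨ε, δ, hε, hδ, hrec, -, hsgn⟩ := carry_exists P f hP e hz hbd hsum (i:ℕ)
      obtain ⟨hε0, hδ0⟩ := hsgn hge
      have hei : e (i:ℕ) = -1 - c i := by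
        rw [hefin i, hxJ i hi, hai]; ring
      have hci := (hc i).1
      have hε1 := (abs_le.1 hε).2
      have hh : 0 ≤ P * δ := mul_nonneg hPpos.le hδ0
      linarith
  -- k = 0
  · set e : ℕ → ℤ := fun n => if h : n < f then x ⟨n, h⟩ - c ⟨n, h⟩ else 0 with hedef
    have hz : ∀ i, f ≤ i → e i = 0 := fun i hi => dif_neg (by omega)
    have hefin : ∀ i : Fin f, e (i : ℕ) = x i - c i := by
      intro i; simp only [hedef, i.isLt, dif_pos, Fin.eta]
    have hbd : ∀ i, |e i| ≤ 2 * P - 2 := by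
      intro i
      by_cases h : i < f
      · have := hdub ⟨i, h⟩; have := hdlb ⟨i, h⟩
        rw [hedef]; simp only [dif_pos h]
        rw [abs_le]; constructor <;> linarith
      · rw [hz i (by omega)]; simp; linarith
    have hsum : ∑ i ∈ Finset.range f, e i * P ^ i = 0 := by
      rw [← Fin.sum_univ_eq_sum_range (fun n => e n * P ^ n) f]
      have : ∑ i : Fin f, e (i:ℕ) * P ^ (i:ℕ) = ∑ i, (x i - c i) * P ^ (i:ℕ) :=
        Finset.sum_congr rfl fun i _ => by rw [hefin i]
      rw [this, hk]; ring
    have hle : ∀ i, e i ≤ P - 1 := by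
      intro i
      by_cases h : i < f
      · have := hdub ⟨i, h⟩
        rw [hedef]; simp only [dif_pos h]; linarith
      · rw [hz i (by omega)]; linarith
    constructor
    · rintro ⟨j, hjc, hbj⟩
      exfalso
      obtain ⟨ε, δ, hε, hδ, hrec, hsgn, -⟩ := carry_exists P f hP e hz hbd hsum (j:ℕ)
      obtain ⟨hε0, hδ0⟩ := hsgn hle
      have hej : e (j:ℕ) = P - c j := by
        rw [hefin j, hxJc j hjc, hbj]
      have hcj := (hc j).2
      have hε1 := (abs_le.1 hε).1
      have hh : P * δ ≤ 0 := mul_nonpos_of_nonneg_of_nonpos hPpos.le hδ0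
      linarith
    · rintro ⟨i, hi, hai⟩
      exfalso
      obtain ⟨ε, δ, hε, hδ, hrec, hsgn, -⟩ := carry_exists P f hP e hz hbd hsum (i:ℕ)
      obtain ⟨hε0, hδ0⟩ := hsgn hle
      have hei : e (i:ℕ) = -P - c i := by
        rw [hefin i, hxJ i hi, hai]
      have hci := (hc i).1
      have hδ1 := (abs_le.1 hδ).1
      have hh : P * (-1) ≤ P * δ := mul_le_mul_of_nonneg_left hδ1 hPpos.le
      linarith
  -- k = 1
  · have hzero : ∑ i : Fin f, ((P - 1) - (x i - c i)) * P ^ (i:ℕ) = 0 := by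
      have hsplit : ∑ i : Fin f, ((P - 1) - (x i - c i)) * P ^ (i:ℕ)
          = (∑ i : Fin f, (P - 1) * P ^ (i:ℕ)) - ∑ i, (x i - c i) * P ^ (i:ℕ) := by
        rw [← Finset.sum_sub_distrib]
        exact Finset.sum_congr rfl fun i _ => by ring
      have h2 : ∑ i : Fin f, (P - 1) * P ^ (i:ℕ) = (P - 1) * L := by
        rw [hLdef, Finset.mul_sum]
      rw [hsplit, h2, hk]; nlinarith
    have hall : ∀ i : Fin f, x i - c i = P - 1 := by
      intro i
      have := (Finset.sum_eq_zero_iff_of_nonneg (fun i _ =>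
        mul_nonneg (by linarith [hdub i]) (pow_nonneg hPpos.le _))).1 hzero i
        (Finset.mem_univ i)
      have hne : P ^ (i:ℕ) ≠ 0 := (pow_pos hPpos _).ne'
      rcases mul_eq_zero.1 this with h | h
      · linarith
      · exact absurd h hne
    have hJempty : J = ∅ := by
      refine Finset.eq_empty_of_forall_notMem fun i hi => ?_
      have h1 := (ha i hi).1
      have h2 := (hc i).1
      have h3 := hall i
      rw [hxJ i hi] at h3
      linarith
    have hcb : ∀ i : Fin f, c i = 1 ∧ b i = P := by
      intro i
      have hiJc : i ∈ Jᶜ := Finset.mem_compl.2 (by rw [hJempty]; exact Finset.notMem_empty i)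
      have h3 := hall i
      rw [hxJc i hiJc] at h3
      have h1 := (hb i hiJc).2
      have h2 := (hc i).1
      constructor <;> linarith
    constructor
    · exact fun _ => ⟨fun i => (hcb i).1, hJempty, fun j _ => (hcb j).2⟩
    · rintro ⟨i, hi, -⟩
      rw [hJempty] at hi
      exact absurd hi (Finset.notMem_empty i)
end
end

section
/- Let p be an odd prime, f ≥ 1 and let ξ ∈ ℤ_p^× satisfy ξ ≡ 1 + zp mod p^2 with 0 < z ≤ p−1. Let γ act on 𝔽_p((π)) by γ(π) = (1+π)^ξ − 1, and let λ_ξ ∈ 1 + π𝔽_p[[π]] be the unique (p^f−1)/(p−1)-th root of γ(π)/π (note ξ̄ = 1 in 𝔽_p). Then for any integers Σ, s with v = v_p(Σ + s(p^f−1)/(p−1)) < ∞, writing Σ + s(p^f−1)/(p−1) = Σ_{j≥v} s_j p^j, we have λ_ξ(π)^Σ · γ(π^s) − π^s ∈ s̄_v·z̄·(π^{s+(p−1)p^v} + π^{s+p^{v+1}}) + π^{s+2p^v(p−1)}·𝔽_p[[π^{p^v}]]. -/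
noncomputable section

open PowerSeries

namespace StmtAux
open Finset


variable {F : Type} [Field F]

/-- equality of coefficients below `d` -/
def EqMod (d : ℕ) (a b : PowerSeries F) : Prop := ∀ i, i < d → coeff i a = coeff i b

theorem EqMod.refl (d : ℕ) (a : PowerSeries F) : EqMod d a a := fun _ _ => rfl

theorem EqMod.symm {d : ℕ} {a b : PowerSeries F} (h : EqMod d a b) : EqMod d b a :=
  fun i hi => (h i hi).symm

theorem EqMod.trans {d : ℕ} {a b c : PowerSeries F} (h : EqMod d a b) (h' : EqMod d b c) :
    EqMod d a c := fun i hi => (h i hi).trans (h' i hi)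

theorem EqMod.add {d : ℕ} {a b a' b' : PowerSeries F} (h : EqMod d a b) (h' : EqMod d a' b') :
    EqMod d (a + a') (b + b') := fun i hi => by
  simp only [map_add, h i hi, h' i hi]

theorem EqMod.mul {d : ℕ} {a b a' b' : PowerSeries F} (h : EqMod d a b) (h' : EqMod d a' b') :
    EqMod d (a * a') (b * b') := by
  intro i hi
  rw [coeff_mul, coeff_mul]
  refine Finset.sum_congr rfl fun x hx => ?_
  rw [HasAntidiagonal.mem_antidiagonal] at hx
  rw [h x.1 (lt_of_le_of_lt (le_of_add_le_left hx.le) hi),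
    h' x.2 (lt_of_le_of_lt (le_of_add_le_right hx.le) hi)]

theorem EqMod.exists_eq {d : ℕ} {a b : PowerSeries F} (h : EqMod d a b) :
    ∃ g : PowerSeries F, a = b + X ^ d * g := by
  refine ⟨PowerSeries.mk fun n => coeff (d + n) (a - b), ?_⟩
  ext n
  rw [map_add, coeff_X_pow_mul']
  by_cases hn : d ≤ n
  · rw [if_pos hn, coeff_mk]
    have : d + (n - d) = n := by omega
    rw [this, map_sub]; ring
  · rw [if_neg hn, h n (by omega), add_zero]

theorem eqMod_of_eq_add {d : ℕ} {a b g : PowerSeries F} (h : a = b + X ^ d * g) :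
    EqMod d a b := by
  intro i hi
  rw [h, map_add, coeff_X_pow_mul', if_neg (by omega), add_zero]

/-- coefficient of `e * r` at lowest possibly-nonzero index of `e` -/
theorem coeff_mul_of_lower_vanish {i : ℕ} {e r : PowerSeries F}
    (he : ∀ j, j < i → coeff j e = 0) :
    coeff i (e * r) = coeff i e * constantCoeff r := by
  rw [coeff_mul]
  rw [Finset.sum_eq_single (i, 0)]
  · rw [coeff_zero_eq_constantCoeff]
  · intro b hb hne
    rw [HasAntidiagonal.mem_antidiagonal] at hb
    rcases Nat.lt_or_ge b.1 i with h1 | h1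
    · rw [he b.1 h1, zero_mul]
    · exfalso; apply hne
      have : b.1 = i := le_antisymm (by omega) h1
      have : b.2 = 0 := by omega
      exact Prod.ext (by omega) this
  · intro hmem
    exfalso; exact hmem (by simp)



variable (p : ℕ) [Fact p.Prime]

instance : CharP (PowerSeries (ZMod p)) p :=
  charP_of_injective_ringHom (f := (PowerSeries.C : ZMod p →+* PowerSeries (ZMod p)))
    (fun a b h => by simpa using congrArg (constantCoeff) h) p

theorem pow_p_eq_psubst (g : PowerSeries (ZMod p)) : g ^ p = psubst (ZMod p) p g := by
  have hp : 0 < p := (Fact.out : p.Prime).pos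
  ext n
  set q : Polynomial (ZMod p) := trunc (n + 1) g with hq
  have hsplit : g = (q : PowerSeries (ZMod p)) + (g - q) := by ring
  have hlow : ∀ j, j < n + 1 → coeff j (g - (q : PowerSeries (ZMod p))) = 0 := by
    intro j hj
    rw [map_sub, Polynomial.coeff_coe, coeff_trunc, if_pos hj, sub_self]
  have hpow : g ^ p = (q : PowerSeries (ZMod p)) ^ p + (g - q) ^ p := by
    conv_lhs => rw [hsplit]
    exact add_pow_char _ _ _
  have hz : coeff n ((g - (q : PowerSeries (ZMod p))) ^ p) = 0 := by
    have : (g - (q : PowerSeries (ZMod p))) ^ p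
        = (g - (q : PowerSeries (ZMod p))) * (g - (q : PowerSeries (ZMod p))) ^ (p - 1) := by
      rw [← pow_succ']
      congr 1; omega
    rw [this, coeff_mul]
    refine Finset.sum_eq_zero fun x hx => ?_
    rw [HasAntidiagonal.mem_antidiagonal] at hx
    rw [hlow x.1 (by omega), zero_mul]
  have hqp : (q : PowerSeries (ZMod p)) ^ p = ((q ^ p : Polynomial (ZMod p)) : PowerSeries (ZMod p)) := by
    push_cast; ring
  have hexp : q ^ p = Polynomial.expand (ZMod p) p q := by
    exact (ZMod.expand_card q).symm
  rw [hpow, map_add, hz, add_zero, hqp, hexp, Polynomial.coeff_coe, Polynomial.coeff_expand hp,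
    psubst, coeff_mk]
  by_cases hd : p ∣ n
  · rw [if_pos hd, if_pos hd, hq, coeff_trunc, if_pos (Nat.lt_succ_of_le (Nat.div_le_self n p))]
  · rw [if_neg hd, if_neg hd]

theorem psubst_psubst (k l : ℕ) (hk : 0 < k) {F : Type} [Field F] (g : PowerSeries F) :
    psubst F k (psubst F l g) = psubst F (k * l) g := by
  ext n
  simp only [psubst, coeff_mk]
  by_cases h1 : k ∣ n
  · rw [if_pos h1]
    have : l ∣ n / k ↔ k * l ∣ n := by
      rw [Nat.dvd_div_iff_mul_dvd h1]
    by_cases h2 : l ∣ n / k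
    · rw [if_pos h2, if_pos (this.mp h2), Nat.div_div_eq_div_mul]
    · rw [if_neg h2, if_neg (fun hc => h2 (this.mpr hc))]
  · rw [if_neg h1, if_neg (fun hc => h1 (dvd_trans (Dvd.intro l rfl) hc))]

theorem pow_p_pow_eq_psubst (v : ℕ) (g : PowerSeries (ZMod p)) :
    g ^ (p ^ v) = psubst (ZMod p) (p ^ v) g := by
  have hp : 0 < p := (Fact.out : p.Prime).pos
  induction v with
  | zero =>
    ext n
    simp [psubst, coeff_mk]
  | succ v ih =>
    rw [pow_succ, pow_mul, ih, pow_p_eq_psubst p, psubst_psubst p (p ^ v) hp, mul_comm]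

-- binom coefficients


theorem binom_coeff (p : ℕ) [Fact p.Prime] (hp2 : 2 < p) (ξ : PadicInt p) (z : ℕ)
    (hz1 : z ≤ p - 1)
    (hξ : ((p : PadicInt p) ^ 2) ∣ (ξ - (1 + (z : PadicInt p) * p)))
    (n : ℕ) (hn : n ≤ 2 * p - 2) :
    ((ξ.appr (n + 1)).choose n : ZMod p)
      = (if n = 0 ∨ n = 1 then 1 else 0) + (if n = p ∨ n = p + 1 then (z : ZMod p) else 0) := by
  have hp : 0 < p := by omega
  rcases Nat.eq_zero_or_pos n with hn0 | hn1
  · subst hn0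
    rw [Nat.choose_zero_right, if_pos (Or.inl rfl), if_neg (by omega)]
    simp
  set A := ξ.appr (n + 1) with hA
  -- p² divides ξ - A in ℤ_[p]
  have hdvd1 : ((p : PadicInt p) ^ 2) ∣ ξ - (A : PadicInt p) := by
    have h1 := PadicInt.appr_spec (n + 1) ξ
    rw [Ideal.mem_span_singleton] at h1
    exact dvd_trans (pow_dvd_pow _ (by omega)) h1
  have hdvd2 : ((p : PadicInt p) ^ 2) ∣ ((A : ℤ) - (1 + z * p) : ℤ) := by
    have : (((A : ℤ) - (1 + z * p) : ℤ) : PadicInt p)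
        = (ξ - (1 + (z : PadicInt p) * p)) - (ξ - (A : PadicInt p)) := by
      push_cast; ring
    rw [this]
    exact dvd_sub hξ hdvd1
  -- transfer to ℤ
  have hdvdZ : ((p : ℤ) ^ 2) ∣ ((A : ℤ) - (1 + z * p)) := by
    rw [← PadicInt.norm_int_le_pow_iff_dvd]
    rw [PadicInt.norm_le_pow_iff_mem_span_pow, Ideal.mem_span_singleton]
    exact_mod_cast hdvd2
  have hmod : A ≡ 1 + z * p [MOD p ^ 2] := by
    rw [← Int.natCast_modEq_iff]
    refine (Int.ModEq.symm (Int.modEq_iff_dvd.mpr ?_))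
    push_cast
    exact_mod_cast hdvdZ
  have hlt : 1 + z * p < p ^ 2 := by
    have h' : z * p + p ≤ p * p := by
      have := Nat.mul_le_mul_right p (show z + 1 ≤ p by omega)
      rwa [add_one_mul] at this
    rw [pow_two]; omega
  have hAmod : A % p ^ 2 = 1 + z * p := by
    rw [Nat.ModEq] at hmod
    rw [hmod, Nat.mod_eq_of_lt hlt]
  set t := A / p ^ 2 with ht
  have hAt : A = 1 + p * (z + p * t) := by
    have h1 := Nat.div_add_mod A (p ^ 2)
    rw [hAmod] at h1
    rw [← ht] at h1
    have h2 : p ^ 2 * t = p * p * t := by rw [pow_two]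
    have h3 : p * (z + p * t) = z * p + p * p * t := by ring
    omega
  have hAmodp : A % p = 1 := by
    rw [hAt, Nat.add_mul_mod_self_left, Nat.mod_eq_of_lt (by omega)]
  have hAdivp : A / p = z + p * t := by
    rw [hAt, Nat.add_mul_div_left _ _ hp, Nat.div_eq_of_lt (by omega), Nat.zero_add]
  -- Lucas
  have lucas : (A.choose n : ZMod p)
      = ((A % p).choose (n % p) : ZMod p) * ((A / p).choose (n / p) : ZMod p) := by
    have := (Choose.choose_modEq_choose_mod_mul_choose_div_nat (p := p) (n := A) (k := n))
    rw [← ZMod.natCast_eq_natCast_iff] at this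
    push_cast at this
    exact this
  have hdivpz : (((A / p) : ℕ) : ZMod p) = (z : ZMod p) := by
    rw [hAdivp]; push_cast [ZMod.natCast_self]; ring
  rcases Nat.lt_or_ge n p with hcase | hcase
  · -- n < p
    have h1 : n % p = n := Nat.mod_eq_of_lt hcase
    have h2 : n / p = 0 := Nat.div_eq_of_lt hcase
    rw [lucas, h1, h2, hAmodp, Nat.choose_zero_right]
    rcases Nat.eq_or_lt_of_le hn1 with h3 | h3
    · rw [← h3, Nat.choose_one_right]
      rw [if_pos (Or.inr rfl), if_neg (by omega)]
      simp
    · rw [Nat.choose_eq_zero_of_lt h3]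
      rw [if_neg (by omega), if_neg (by omega)]
      simp
  · -- p ≤ n ≤ 2p-2
    have h1 : n % p = n - p := by
      rw [Nat.mod_eq_sub_mod hcase, Nat.mod_eq_of_lt (by omega)]
    have h2 : n / p = 1 := Nat.div_eq_of_lt_le (by omega) (by omega)
    rw [lucas, h1, h2, hAmodp, Nat.choose_one_right, hdivpz]
    rcases Nat.lt_or_ge (n - p) 2 with h3 | h3
    · have h4 : n = p ∨ n = p + 1 := by omega
      have h5 : Nat.choose 1 (n - p) = 1 := by
        interval_cases h : (n - p) <;> simp
      rw [h5, if_pos h4, if_neg (by omega)]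
      simp
    · rw [Nat.choose_eq_zero_of_lt (by omega), if_neg (by omega), if_neg (by omega)]
      simp


/-- the auxiliary series `t = X^(p-1) + X^p` -/
def tF (F : Type) [Field F] (p : ℕ) : PowerSeries F := X ^ (p - 1) + X ^ p

/-- `μ_a = 1 + a t` -/
def muF (F : Type) [Field F] (p : ℕ) (a : F) : PowerSeries F := 1 + C a * tF F p

theorem tF_eq (p : ℕ) (hp : 0 < p) : tF F p = X ^ (p - 1) * ((1 : PowerSeries F) + X) := by
  rw [tF, mul_add, mul_one, ← pow_succ]
  congr 2
  omega

theorem tF_sq (p : ℕ) (hp : 0 < p) :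
    EqMod (2 * p - 2) (tF F p * tF F p : PowerSeries F) 0 := by
  intro i hi
  have h1 : tF F p * tF F p
      = X ^ (2 * p - 2) * (((1 : PowerSeries F) + X) * ((1 : PowerSeries F) + X)) := by
    rw [tF_eq p hp]
    have h2 : (X : PowerSeries F) ^ (p - 1) * X ^ (p - 1) = X ^ (2 * p - 2) := by
      rw [← pow_add]; congr 1; omega
    rw [← h2]; ring
  rw [h1, coeff_X_pow_mul', if_neg (by omega), map_zero]

theorem constantCoeff_muF (p : ℕ) (hp : 1 < p) (a : F) : constantCoeff (muF F p a) = 1 := by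
  rw [muF, map_add, map_mul, constantCoeff_C, constantCoeff_one, tF, map_add, map_pow, map_pow,
    constantCoeff_X, zero_pow (by omega : p - 1 ≠ 0), zero_pow (by omega : p ≠ 0)]
  ring

/-- the key congruence class property -/
def Q (p : ℕ) (a : F) (x : PowerSeries F) : Prop := EqMod (2 * p - 2) x (muF F p a)

theorem Q.one (p : ℕ) : Q p (0 : F) 1 := by
  intro i hi
  rw [muF, map_zero, zero_mul, add_zero]

theorem Q.mul {p : ℕ} (hp : 0 < p) {a b : F} {x y : PowerSeries F} (hx : Q p a x) (hy : Q p b y) :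
    Q p (a + b) (x * y) := by
  refine (EqMod.mul hx hy).trans ?_
  have key : muF F p a * muF F p b = muF F p (a + b) + (C a * C b) * (tF F p * tF F p) := by
    rw [muF, muF, muF, map_add]; ring
  intro i hi
  rw [key, map_add]
  have h0 : coeff i ((C a * C b) * (tF F p * tF F p)) = 0 := by
    have := (EqMod.mul (EqMod.refl (2 * p - 2) (C a * C b)) (tF_sq p hp)) i hi
    rw [this, mul_zero, map_zero]
  rw [h0, add_zero]

theorem Q.pow {p : ℕ} (hp : 0 < p) {a : F} {x : PowerSeries F} (hx : Q p a x) (n : ℕ) :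
    Q p (n * a) (x ^ n) := by
  induction n with
  | zero => simpa using Q.one p
  | succ n ih =>
    have hc : ((n + 1 : ℕ) : F) * a = (n : F) * a + a := by push_cast; ring
    rw [pow_succ, hc]
    exact Q.mul hp ih hx

theorem Q.inv {p : ℕ} (hp : 0 < p) {a : F} {x y : PowerSeries F} (hx : Q p a x)
    (hxy : x * y = 1) : Q p (-a) y := by
  have h1 : EqMod (2 * p - 2) (x * (1 - C a * tF F p)) 1 := by
    refine (EqMod.mul hx (EqMod.refl _ _)).trans ?_
    have key : muF F p a * (1 - C a * tF F p)
        = 1 - (C a * C a) * (tF F p * tF F p) := by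
      rw [muF]; ring
    intro i hi
    rw [key, map_sub]
    have h0 : coeff i ((C a * C a) * (tF F p * tF F p)) = 0 := by
      have := (EqMod.mul (EqMod.refl (2 * p - 2) (C a * C a)) (tF_sq p hp)) i hi
      rw [this, mul_zero, map_zero]
    rw [h0, sub_zero]
  have h2 : EqMod (2 * p - 2) y (1 - C a * tF F p) := by
    have h3 : EqMod (2 * p - 2) (y * (x * (1 - C a * tF F p))) (y * 1) :=
      EqMod.mul (EqMod.refl _ y) h1
    have h4 : y * (x * (1 - C a * tF F p)) = (x * y) * (1 - C a * tF F p) := by ring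
    rw [h4, hxy, one_mul, mul_one] at h3
    exact h3.symm
  refine h2.trans ?_
  intro i hi
  rw [muF, map_neg]
  congr 1
  ring



theorem Q.of_pow {p : ℕ} (hp2 : 2 < p) {a : F} {lam : PowerSeries F} {N : ℕ} (hN1 : 1 ≤ N)
    (hNmod : (N : F) = 1) (hlam0 : constantCoeff lam = 1)
    (hQN : Q p a (lam ^ N)) : Q p a lam := by
  have hp : 0 < p := by omega
  have hμ0 : constantCoeff (muF F p a) = 1 := constantCoeff_muF p (by omega) a
  intro i
  induction i using Nat.strong_induction_on with
  | _ i ih =>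
    intro hi
    rcases Nat.eq_zero_or_pos i with h0 | h1
    · subst h0
      simp only [coeff_zero_eq_constantCoeff]; rw [hlam0, hμ0]
    · set e := lam - muF F p a with he
      have helow : ∀ j, j < i → coeff j e = 0 := fun j hj => by
        rw [he, map_sub, ih j hj (by omega), sub_self]
      have hlam_eq : lam = e + muF F p a := by rw [he]; ring
      have key : coeff i (lam ^ N)
          = coeff i ((muF F p a) ^ N) + coeff i e := by
        conv_lhs => rw [hlam_eq, add_pow, map_sum]
        have hterm : ∀ k ∈ range (N + 1),
            coeff i (e ^ k * (muF F p a) ^ (N - k) * ((N.choose k : ℕ) : PowerSeries F))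
              = (if k = 0 then coeff i ((muF F p a) ^ N) else 0)
                + (if k = 1 then coeff i e else 0) := by
          intro k hk
          rcases Nat.lt_or_ge k 2 with hk2 | hk2
          · interval_cases k
            · simp
            · rw [if_neg one_ne_zero, if_pos rfl, pow_one, Nat.choose_one_right,
                ← map_natCast (C (R := F)) N, hNmod, map_one, mul_one, zero_add,
                coeff_mul_of_lower_vanish helow, map_pow, hμ0, one_pow, mul_one]
          · rw [if_neg (by omega), if_neg (by omega), add_zero]
            have hsplit : e ^ k * (muF F p a) ^ (N - k) * ((N.choose k : ℕ) : PowerSeries F)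
                = e * (e ^ (k - 1) * ((muF F p a) ^ (N - k)
                    * ((N.choose k : ℕ) : PowerSeries F))) := by
              have : e ^ k = e * e ^ (k - 1) := by
                rw [← pow_succ']; congr 1; omega
              rw [this]; ring
            rw [hsplit, coeff_mul_of_lower_vanish helow]
            have hc0 : constantCoeff e = 0 := by
              rw [← coeff_zero_eq_constantCoeff]; exact helow 0 h1
            rw [map_mul, map_pow, hc0, zero_pow (by omega : k - 1 ≠ 0), zero_mul, mul_zero]
        rw [Finset.sum_congr rfl hterm, Finset.sum_add_distrib,
          Finset.sum_ite_eq' (range (N + 1)) 0 (fun _ => coeff i ((muF F p a) ^ N)),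
          Finset.sum_ite_eq' (range (N + 1)) 1 (fun _ => coeff i e),
          if_pos (by simp : (0 : ℕ) ∈ range (N + 1)),
          if_pos (by simp [Nat.lt_succ_of_le hN1] : (1 : ℕ) ∈ range (N + 1))]
      have h2 : coeff i (lam ^ N) = coeff i (muF F p a) := hQN i hi
      have h3 : coeff i ((muF F p a) ^ N) = coeff i (muF F p a) := by
        have hQμ : Q p ((N : F) * a) ((muF F p a) ^ N) :=
          Q.pow hp (EqMod.refl _ _) N
        rw [hNmod, one_mul] at hQμ
        exact hQμ i hi
      rw [key, h3] at h2
      have h4 : coeff i e = 0 := by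
        have := h2
        rwa [add_eq_left] at this
      rw [he, map_sub, sub_eq_zero] at h4
      exact h4


end StmtAux

theorem stmt_7 (p : ℕ) [Fact p.Prime] (hp2 : 2 < p) (f : ℕ) (hf : 1 ≤ f)
    (ξ : PadicInt p) (z : ℕ) (hz0 : 0 < z) (hz1 : z ≤ p - 1)
    (hξ : ((p : PadicInt p) ^ 2) ∣ (ξ - (1 + (z : PadicInt p) * p)))
    (lam : PowerSeries (ZMod p))
    (hlam0 : PowerSeries.constantCoeff lam = 1)
    (hlam : lam ^ ((p ^ f - 1) / (p - 1)) * PowerSeries.X = binomSeries (ZMod p) p ξ - 1)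
    (S s : ℤ) (v : ℕ)
    (hv1 : (p : ℤ) ^ v ∣ (S + s * (((p : ℤ) ^ f - 1) / ((p : ℤ) - 1))))
    (hv2 : ¬ (p : ℤ) ^ (v + 1) ∣ (S + s * (((p : ℤ) ^ f - 1) / ((p : ℤ) - 1)))) :
    ∃ g : PowerSeries (ZMod p),
      lS (ZMod p) lam ^ S * lS (ZMod p) (binomSeries (ZMod p) p ξ - 1) ^ s - T (ZMod p) s
        = HahnSeries.C
              ((((S + s * (((p : ℤ) ^ f - 1) / ((p : ℤ) - 1))) / (p : ℤ) ^ v : ℤ) : ZMod p) *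
                (z : ZMod p)) *
            (T (ZMod p) (s + ((p : ℤ) - 1) * (p : ℤ) ^ v) + T (ZMod p) (s + (p : ℤ) ^ (v + 1)))
          + T (ZMod p) (s + 2 * (p : ℤ) ^ v * ((p : ℤ) - 1)) *
              lS (ZMod p) (psubst (ZMod p) (p ^ v) g) := by
  classical
  have hp : 0 < p := by omega
  have hp1 : 1 < p := by omega
  set N : ℕ := (p ^ f - 1) / (p - 1) with hNdef
  set Nf : ℕ := ∑ i ∈ Finset.range f, p ^ i with hNfdef
  -- geometric sum facts
  have hNfZ : ((p : ℤ) - 1) * (Nf : ℤ) = (p : ℤ) ^ f - 1 := by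
    have h := geom_sum_mul ((p : ℤ)) f
    rw [hNfdef]
    push_cast
    linear_combination h
  have hNZ : (((p : ℤ) ^ f - 1) / ((p : ℤ) - 1)) = (Nf : ℤ) := by
    rw [← hNfZ, Int.mul_ediv_cancel_left _ (by omega : (p : ℤ) - 1 ≠ 0)]
  have hNnat : N = Nf := by
    have hpf : 1 ≤ p ^ f := Nat.one_le_pow _ _ hp
    have h1 : p ^ f - 1 = Nf * (p - 1) := by
      zify [hpf, hp1.le]
      linear_combination -hNfZ
    rw [hNdef, h1, Nat.mul_div_cancel _ (by omega : 0 < p - 1)]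
  have hNZ' : (((p : ℤ) ^ f - 1) / ((p : ℤ) - 1)) = (N : ℤ) := by rw [hNZ, hNnat]
  have hNmod : ((N : ℕ) : ZMod p) = 1 := by
    rw [hNnat, hNfdef]
    push_cast
    rw [ZMod.natCast_self]
    rw [Finset.sum_eq_single_of_mem 0 (Finset.mem_range.mpr (by omega))]
    · exact pow_zero 0
    · intro b _ hb
      exact zero_pow hb
  have hN1 : 1 ≤ N := by
    have hpos : 0 < Nf := by
      rw [hNfdef]
      exact Finset.sum_pos (fun i _ => pow_pos hp i) (Finset.nonempty_range_iff.mpr (by omega))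
    omega
  -- the congruence lam^N ≡ 1 + z t mod X^(2p-2)
  have hEq1 : StmtAux.EqMod (2 * p - 2) (lam ^ N)
      (StmtAux.muF (ZMod p) p (z : ZMod p)) := by
    intro i hi
    have hcoeff : PowerSeries.coeff i (lam ^ N)
        = PowerSeries.coeff (i + 1) (binomSeries (ZMod p) p ξ) := by
      have h := congrArg (PowerSeries.coeff (i + 1)) hlam
      rw [PowerSeries.coeff_succ_mul_X] at h
      rw [h, map_sub, PowerSeries.coeff_one, if_neg (Nat.succ_ne_zero i), sub_zero]
    have hval := StmtAux.binom_coeff p hp2 ξ z hz1 hξ (i + 1) (by omega)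
    have hbc : PowerSeries.coeff (i + 1) (binomSeries (ZMod p) p ξ)
        = ((ξ.appr (i + 1 + 1)).choose (i + 1) : ZMod p) := by
      rw [binomSeries, PowerSeries.coeff_mk]
    rw [hcoeff, hbc, hval]
    rw [StmtAux.muF, StmtAux.tF, map_add, PowerSeries.coeff_one, PowerSeries.coeff_C_mul,
      map_add, PowerSeries.coeff_X_pow, PowerSeries.coeff_X_pow]
    have c1 : (i + 1 = 0 ∨ i + 1 = 1) ↔ i = 0 := by omega
    have c2 : (i + 1 = p ∨ i + 1 = p + 1) ↔ (i = p - 1 ∨ i = p) := by omega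
    rw [if_congr c1 rfl rfl, if_congr c2 rfl rfl]
    congr 1
    by_cases h1 : i = p - 1
    · rw [if_pos (Or.inl h1), if_pos h1, if_neg (by omega)]
      ring
    · by_cases h2 : i = p
      · rw [if_pos (Or.inr h2), if_neg h1, if_pos h2]
        ring
      · rw [if_neg (by tauto), if_neg h1, if_neg h2]
        ring
  have hQlam : StmtAux.Q p ((z : ℕ) : ZMod p) lam :=
    StmtAux.Q.of_pow hp2 hN1 hNmod hlam0 hEq1
  -- unit structure
  have hlamunit : IsUnit lam := by
    rw [PowerSeries.isUnit_iff_constantCoeff, hlam0]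
    exact isUnit_one
  set u : (PowerSeries (ZMod p))ˣ := hlamunit.unit with hudef
  have hu : (u : PowerSeries (ZMod p)) = lam := hlamunit.unit_spec
  -- integer bookkeeping
  rw [hNZ'] at hv1 hv2 ⊢
  set m : ℤ := S + s * (N : ℤ) with hmdef
  set m' : ℤ := m / (p : ℤ) ^ v with hm'def
  have hmm : m = m' * (p : ℤ) ^ v := (Int.ediv_mul_cancel hv1).symm
  -- the power series w = lam ^ m'
  set w : PowerSeries (ZMod p) := ((u ^ m' : (PowerSeries (ZMod p))ˣ) : PowerSeries (ZMod p))
    with hwdef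
  have hQinv : StmtAux.Q p (-((z : ℕ) : ZMod p)) ((u⁻¹ : (PowerSeries (ZMod p))ˣ) : PowerSeries (ZMod p)) := by
    refine StmtAux.Q.inv hp hQlam ?_
    rw [← hu, ← Units.val_mul, mul_inv_cancel, Units.val_one]
  have hQgen : ∀ k : ℤ, StmtAux.Q p ((k : ZMod p) * ((z : ℕ) : ZMod p))
      ((u ^ k : (PowerSeries (ZMod p))ˣ) : PowerSeries (ZMod p)) := by
    intro k
    induction k using Int.induction_on with
    | zero =>
      have h0 := StmtAux.Q.one (F := ZMod p) p
      have : ((0 : ℤ) : ZMod p) * ((z : ℕ) : ZMod p) = 0 := by push_cast; ring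
      rw [this, zpow_zero, Units.val_one]
      exact h0
    | succ k ih =>
      have hmul := StmtAux.Q.mul hp ih hQlam
      have hc : (((k : ℤ) + 1 : ℤ) : ZMod p) * ((z : ℕ) : ZMod p)
          = (((k : ℤ)) : ZMod p) * ((z : ℕ) : ZMod p) + ((z : ℕ) : ZMod p) := by
        push_cast; ring
      rw [hc, zpow_add_one, Units.val_mul, hu]
      exact hmul
    | pred k ih =>
      have hmul := StmtAux.Q.mul hp ih hQinv
      have hc : ((-(k : ℤ) - 1 : ℤ) : ZMod p) * ((z : ℕ) : ZMod p)
          = ((-(k : ℤ) : ℤ) : ZMod p) * ((z : ℕ) : ZMod p) + -((z : ℕ) : ZMod p) := by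
        push_cast; ring
      rw [hc, zpow_sub_one, Units.val_mul]
      exact hmul
  have hQw : StmtAux.Q p ((m' : ZMod p) * ((z : ℕ) : ZMod p)) w := hQgen m'
  obtain ⟨g0, hg0⟩ := StmtAux.EqMod.exists_eq hQw
  refine ⟨g0, ?_⟩
  -- Frobenius power computation
  have hum : ((u ^ m : (PowerSeries (ZMod p))ˣ) : PowerSeries (ZMod p)) = w ^ (p ^ v) := by
    rw [hwdef, ← Units.val_pow_eq_pow_val]
    congr 1
    rw [← zpow_natCast (u ^ m') (p ^ v), ← zpow_mul]
    congr 1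
  set c' : ZMod p := (m' : ZMod p) * ((z : ℕ) : ZMod p) with hc'def
  have hwp : w ^ (p ^ v)
      = 1 + PowerSeries.C c'
            * (PowerSeries.X ^ ((p - 1) * p ^ v) + PowerSeries.X ^ (p * p ^ v))
          + PowerSeries.X ^ ((2 * p - 2) * p ^ v) * psubst (ZMod p) (p ^ v) g0 := by
    rw [hg0, StmtAux.muF, StmtAux.tF]
    rw [add_pow_char_pow, add_pow_char_pow, one_pow, mul_pow, mul_pow, add_pow_char_pow,
      ← map_pow, ZMod.pow_card_pow, ← pow_mul, ← pow_mul, ← pow_mul,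
      StmtAux.pow_p_pow_eq_psubst]
  -- Laurent series endgame
  have hTmul : ∀ a b : ℤ, T (ZMod p) a * T (ZMod p) b = T (ZMod p) (a + b) := by
    intro a b
    rw [T, T, T, HahnSeries.single_mul_single, one_mul]
  have hT0 : T (ZMod p) 0 = 1 := HahnSeries.single_zero_one
  have hTpow : ∀ n : ℕ, (T (ZMod p) 1) ^ n = T (ZMod p) (n : ℤ) := by
    intro n
    rw [T, HahnSeries.single_pow, one_pow, T]
    congr 1
    simp
  have hTunit : ∀ a : ℤ, T (ZMod p) a * T (ZMod p) (-a) = 1 := by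
    intro a
    rw [hTmul, add_neg_cancel, hT0]
  have hTzpow : ∀ t : ℤ, (T (ZMod p) 1) ^ t = T (ZMod p) t := by
    intro t
    cases t with
    | ofNat n => rw [Int.ofNat_eq_coe, zpow_natCast, hTpow]
    | negSucc n =>
      rw [zpow_negSucc, hTpow, Int.negSucc_eq]
      refine inv_eq_of_mul_eq_one_right ?_
      push_cast
      exact hTunit _
  have hφX : lS (ZMod p) PowerSeries.X = T (ZMod p) 1 := by
    rw [lS, HahnSeries.ofPowerSeries_X, T]
  set AU : (LaurentSeries (ZMod p))ˣ :=
    Units.map (lS (ZMod p)).toMonoidHom u with hAUdef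
  have hAUval : (AU : LaurentSeries (ZMod p)) = lS (ZMod p) lam := by
    rw [hAUdef]
    simp [hu]
  set UT : (LaurentSeries (ZMod p))ˣ :=
    ⟨T (ZMod p) 1, T (ZMod p) (-1), hTunit 1, by rw [mul_comm]; exact hTunit 1⟩ with hUTdef
  have key1 : lS (ZMod p) lam ^ S * lS (ZMod p) (binomSeries (ZMod p) p ξ - 1) ^ s
      = lS (ZMod p) ((u ^ m : (PowerSeries (ZMod p))ˣ) : PowerSeries (ZMod p)) * T (ZMod p) s := by
    have hb : lS (ZMod p) (binomSeries (ZMod p) p ξ - 1)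
        = ((AU ^ N * UT : (LaurentSeries (ZMod p))ˣ) : LaurentSeries (ZMod p)) := by
      rw [← hlam, map_mul, map_pow, hφX, Units.val_mul, Units.val_pow_eq_pow_val, hAUval]
    rw [hb, ← hAUval]
    rw [← Units.val_zpow_eq_zpow_val, ← Units.val_zpow_eq_zpow_val, ← Units.val_mul]
    have hgrp : AU ^ S * (AU ^ N * UT) ^ s = AU ^ m * UT ^ s := by
      have hmeq : m = S + (N : ℤ) * s := by rw [hmdef]; ring
      rw [hmeq, mul_zpow (AU ^ N) UT s, ← zpow_natCast AU N, ← zpow_mul, ← mul_assoc,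
        ← zpow_add]
    rw [hgrp, Units.val_mul]
    congr 1
    · rw [hAUdef, ← MonoidHom.map_zpow (Units.map (lS (ZMod p)).toMonoidHom) u m,
        Units.coe_map]
      rfl
    · rw [Units.val_zpow_eq_zpow_val]
      exact hTzpow s
  have key2 : lS (ZMod p) ((u ^ m : (PowerSeries (ZMod p))ˣ) : PowerSeries (ZMod p))
      = 1 + HahnSeries.C c'
            * (T (ZMod p) (((p - 1) * p ^ v : ℕ) : ℤ) + T (ZMod p) ((p * p ^ v : ℕ) : ℤ))
          + T (ZMod p) (((2 * p - 2) * p ^ v : ℕ) : ℤ)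
            * lS (ZMod p) (psubst (ZMod p) (p ^ v) g0) := by
    have hφC : ∀ c : ZMod p, lS (ZMod p) (PowerSeries.C c) = HahnSeries.C c := by
      intro c; rw [lS, HahnSeries.ofPowerSeries_C]
    rw [hum, hwp, hc'def]
    simp only [map_add, map_mul, map_pow, map_one, hφX, hTpow, hφC]
  -- exponent bookkeeping
  have e1 : s + ((p : ℤ) - 1) * (p : ℤ) ^ v = (((p - 1) * p ^ v : ℕ) : ℤ) + s := by
    push_cast [Nat.cast_sub hp1.le]
    ring
  have e2 : s + (p : ℤ) ^ (v + 1) = ((p * p ^ v : ℕ) : ℤ) + s := by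
    push_cast
    ring
  have e3 : s + 2 * (p : ℤ) ^ v * ((p : ℤ) - 1) = (((2 * p - 2) * p ^ v : ℕ) : ℤ) + s := by
    push_cast [Nat.cast_sub (by omega : 2 ≤ 2 * p)]
    ring
  rw [key1, key2, e1, e2, e3, ← hTmul, ← hTmul, ← hTmul]
  ring
end
end

section
/- Let p be prime, f, n ≥ 1, and let γ ∈ ℤ_p^× satisfy γ ≡ 1 + z p^n mod p^{n+1}. Let λ_γ ∈ 1 + π𝔽_p[[π]] be the unique (p^f−1)/(p−1)-th root (with constant term 1) of ((1+π)^γ − 1)/(γ̄ π) in 𝔽_p[[π]]. Then λ_γ ≡ 1 + z̄ π^{p^n − 1} + z̄ π^{p^n} mod π^{2p^n − 2}. -/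
noncomputable section

open PowerSeries

section numtheory
variable {p : ℕ} [hp : Fact p.Prime]

lemma lucasZ (m k : ℕ) : ((m.choose k : ZMod p)) =
    (Nat.choose (m % p) (k % p) : ZMod p) * (Nat.choose (m / p) (k / p) : ZMod p) := by
  rw [← Nat.cast_mul]
  exact (ZMod.natCast_eq_natCast_iff _ _ _).mpr Choose.choose_modEq_choose_mod_mul_choose_div_nat

lemma chsub : ∀ a m m' k, k < p ^ a → m % p ^ a = m' % p ^ a →
    ((m.choose k : ZMod p)) = (m'.choose k : ZMod p) := by
  intro a
  induction a with
  | zero =>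
    intro m m' k hk _
    have : k = 0 := by simpa using hk
    simp [this]
  | succ a ih =>
    intro m m' k hk hm
    rw [lucasZ m k, lucasZ m' k]
    have hp1 : 0 < p := hp.out.pos
    have h1 : m % p = m' % p := by
      have h := congrArg (· % p) hm
      simpa [Nat.mod_mod_of_dvd _ (dvd_pow_self p (Nat.succ_ne_zero a))] using h
    have h2 : (m / p) % p ^ a = (m' / p) % p ^ a := by
      rw [← Nat.mod_mul_right_div_self, ← Nat.mod_mul_right_div_self, ← pow_succ', hm]
    have h3 : k / p < p ^ a := by
      rw [Nat.div_lt_iff_lt_mul hp1, ← pow_succ]; exact hk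
    rw [h1, ih (m/p) (m'/p) (k/p) h3 h2]

lemma mlem : ∀ j m k w, w < p → m % p ^ (j+1) = w * p ^ j → k < 2 * p ^ j →
    ((m.choose k : ZMod p)) = if k = 0 then 1 else if k = p ^ j then (w : ZMod p) else 0 := by
  intro j
  induction j with
  | zero =>
    intro m k w hw hm hk
    simp only [zero_add, pow_one, pow_zero, mul_one] at hm hk ⊢
    interval_cases k
    · simp
    · simp only [Nat.choose_one_right, one_ne_zero, if_false, if_true]
      rw [← Nat.mod_add_div m p, hm]
      push_cast [ZMod.natCast_self]
      ring
  | succ j ih =>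
    intro m k w hw hm hk
    have hp1 : 0 < p := hp.out.pos
    have hm0 : m % p = 0 := by
      have h := congrArg (· % p) hm
      simp only [Nat.mod_mod_of_dvd _ (dvd_pow_self p (Nat.succ_ne_zero _))] at h
      simpa [Nat.mul_mod, pow_succ, Nat.mul_mod_left] using h
    have hmd : (m / p) % p ^ (j+1) = w * p ^ j := by
      rw [← Nat.mod_mul_right_div_self, ← pow_succ', hm, pow_succ', ← Nat.mul_assoc,
        Nat.mul_comm w p, Nat.mul_assoc, Nat.mul_div_cancel_left _ hp1]
    have hkd : k / p < 2 * p ^ j := by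
      rw [Nat.div_lt_iff_lt_mul hp1]
      have : 2 * p ^ (j+1) = 2 * p ^ j * p := by ring
      omega
    rw [lucasZ m k, hm0, ih (m/p) (k/p) w hw hmd hkd]
    have hkmd : k = p * (k / p) + k % p := by
      have := Nat.div_add_mod k p; omega
    by_cases h0 : k % p = 0
    · simp only [h0, Nat.choose_self, Nat.cast_one, one_mul]
      have hk' : k = p * (k / p) := by omega
      by_cases hq0 : k / p = 0
      · have hk0 : k = 0 := by rw [hq0] at hk'; simpa using hk'
        simp [hk0, hq0]
      · have hk0 : k ≠ 0 := fun h => hq0 (by simp [h])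
        rw [if_neg hq0, if_neg hk0]
        by_cases hq1 : k / p = p ^ j
        · have hkk : k = p ^ (j+1) := by rw [hq1] at hk'; rw [hk', pow_succ']
          rw [if_pos hq1, if_pos hkk]
        · have hkk : k ≠ p ^ (j+1) := by
            intro h
            apply hq1
            rw [h, pow_succ', Nat.mul_div_cancel_left _ hp1]
          rw [if_neg hq1, if_neg hkk]
    · have hz : (Nat.choose 0 (k % p) : ZMod p) = 0 := by
        rw [Nat.choose_eq_zero_of_lt (by omega)]; simp
      rw [hz, zero_mul]
      have hk0 : k ≠ 0 := by omega
      have hkp : k ≠ p ^ (j+1) := by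
        intro h; subst h
        rw [pow_succ', Nat.mul_mod_right] at h0; exact h0 rfl
      rw [if_neg hk0, if_neg hkp]

lemma llem (n m k w : ℕ) (hn : 1 ≤ n) (hw : w < p) (hm : m % p ^ (n+1) = 1 + w * p ^ n)
    (hk : k < 2 * p ^ n - 1) :
    ((m.choose k : ZMod p)) =
      if k = 0 ∨ k = 1 then 1
      else if k = p ^ n ∨ k = p ^ n + 1 then (w : ZMod p) else 0 := by
  obtain ⟨n', rfl⟩ : ∃ n', n = n' + 1 := ⟨n - 1, by omega⟩
  have hp1 : 0 < p := hp.out.pos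
  have hp2 : 2 ≤ p := hp.out.two_le
  have hm0 : m % p = 1 := by
    have h := congrArg (· % p) hm
    simp only [Nat.mod_mod_of_dvd _ (dvd_pow_self p (Nat.succ_ne_zero _))] at h
    rw [h, pow_succ, ← Nat.mul_assoc, Nat.add_mul_mod_self_right, Nat.mod_eq_of_lt (by omega)]
  have hmd : (m / p) % p ^ (n'+1) = w * p ^ n' := by
    rw [← Nat.mod_mul_right_div_self, ← pow_succ', hm, pow_succ', ← Nat.mul_assoc,
      Nat.mul_comm w p, Nat.mul_assoc]
    rw [Nat.add_mul_div_left _ _ hp1, Nat.div_eq_of_lt (by omega), Nat.zero_add]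
  have hkd : k / p < 2 * p ^ n' := by
    rw [Nat.div_lt_iff_lt_mul hp1]
    have : 2 * p ^ (n'+1) = 2 * p ^ n' * p := by ring
    omega
  rw [lucasZ m k, hm0, mlem n' (m/p) (k/p) w hw hmd hkd]
  have hkmd : k = p * (k / p) + k % p := by
    have := Nat.div_add_mod k p; omega
  have hppow : p ^ (n'+1) = p * p ^ n' := by rw [pow_succ']
  by_cases h0 : k % p ≤ 1
  · have hc1 : (Nat.choose 1 (k % p) : ZMod p) = 1 := by
      interval_cases h : k % p <;> simp
    rw [hc1, one_mul]
    by_cases hq0 : k / p = 0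
    · have hkk : k = k % p := by rw [hq0] at hkmd; simpa using hkmd
      have : k = 0 ∨ k = 1 := by omega
      rw [if_pos this, if_pos hq0]
    · rw [if_neg hq0]
      have hne01 : ¬ (k = 0 ∨ k = 1) := by
        rintro (rfl | rfl)
        · exact hq0 (Nat.zero_div p)
        · exact hq0 (Nat.div_eq_of_lt (by omega))
      rw [if_neg hne01]
      by_cases hq1 : k / p = p ^ n'
      · have hkk : k = p ^ (n'+1) + k % p := by
          rw [hq1, ← hppow] at hkmd; exact hkmd
        have : k = p ^ (n'+1) ∨ k = p ^ (n'+1) + 1 := by omega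
        rw [if_pos hq1, if_pos this]
      · rw [if_neg hq1]
        have hno : ¬ (k = p ^ (n'+1) ∨ k = p ^ (n'+1) + 1) := by
          rintro (rfl | rfl) <;> apply hq1
          · rw [hppow, Nat.mul_div_cancel_left _ hp1]
          · rw [hppow, Nat.mul_add_div hp1, Nat.div_eq_of_lt (by omega), Nat.add_zero]
        rw [if_neg hno]
  · have hc0 : (Nat.choose 1 (k % p) : ZMod p) = 0 := by
      rw [Nat.choose_eq_zero_of_lt (by omega)]; simp
    rw [hc0, zero_mul]
    have h1 : ¬ (k = 0 ∨ k = 1) := by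
      rintro (rfl | rfl)
      · exact h0 (by simp)
      · exact h0 (le_of_eq (Nat.mod_eq_of_lt (by omega)))
    have h2 : ¬ (k = p ^ (n'+1) ∨ k = p ^ (n'+1) + 1) := by
      rintro (rfl | rfl) <;> apply h0
      · rw [hppow, Nat.mul_mod_right]; omega
      · rw [hppow, Nat.add_comm, Nat.add_mul_mod_self_left,
          Nat.mod_eq_of_lt (by omega : 1 < p)]
    rw [if_neg h1, if_neg h2]

end numtheory

section padic
variable {p : ℕ} [hp : Fact p.Prime]

lemma padic_nat_modeq (c : ℕ) (a b : ℕ)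
    (h : ((p : PadicInt p)) ^ c ∣ ((a : PadicInt p) - b)) : a ≡ b [MOD p ^ c] := by
  obtain ⟨t, ht⟩ := h
  have h2 := congrArg (PadicInt.toZModPow c) ht
  simp only [map_sub, map_mul, map_pow, map_natCast] at h2
  have h3 : ((p : ZMod (p ^ c))) ^ c = 0 := by
    rw [← Nat.cast_pow, ZMod.natCast_self]
  rw [h3, zero_mul, sub_eq_zero] at h2
  exact (ZMod.natCast_eq_natCast_iff _ _ _).mp h2

lemma appr_modeq (γ : PadicInt p) (M c j : ℕ) (hcj : c ≤ j)
    (h : ((p : PadicInt p)) ^ c ∣ (γ - (M : PadicInt p))) :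
    γ.appr j ≡ M [MOD p ^ c] := by
  apply padic_nat_modeq
  have h1 : ((p : PadicInt p)) ^ c ∣ (γ - γ.appr j) := by
    refine dvd_trans (pow_dvd_pow _ hcj) ?_
    exact (Ideal.mem_span_singleton.mp (PadicInt.appr_spec j γ))
  have : ((γ.appr j : PadicInt p) - M) = (γ - M) - (γ - γ.appr j) := by ring
  rw [this]
  exact dvd_sub h h1

end padic

section ps
lemma pow_expand {R : Type*} [CommRing R] (μ : R) :
    ∀ e : ℕ, ∃ c, (1 + μ) ^ e = 1 + (e : R) * μ + μ ^ 2 * c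
  | 0 => ⟨0, by simp⟩
  | (e+1) => by
    obtain ⟨c, hc⟩ := pow_expand μ e
    refine ⟨c + (e : R) + μ * c, ?_⟩
    rw [pow_succ, hc]
    push_cast
    ring
end ps

lemma geom_nat (p : ℕ) (hp : 1 ≤ p) : ∀ f : ℕ, (p - 1) * ∑ i ∈ Finset.range f, p ^ i = p ^ f - 1
  | 0 => by simp
  | (f+1) => by
    rw [Finset.sum_range_succ, Nat.mul_add, geom_nat p hp f, pow_succ]
    have h1 : (p - 1) * p ^ f = p * p ^ f - p ^ f := by rw [Nat.sub_mul, one_mul]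
    have h2 : 1 ≤ p ^ f := Nat.one_le_pow _ _ (by omega)
    have h3 : p ^ f ≤ p * p ^ f := Nat.le_mul_of_pos_left _ (by omega)
    have h4 : p * p ^ f = p ^ f * p := Nat.mul_comm _ _
    omega


/-- Lemma `gamma n`: if `γ ≡ 1 + zp^n mod p^{n+1}` then
`λ_γ ≡ 1 + z̄π^{p^n-1} + z̄π^{p^n} mod π^{2p^n-2}`. -/
theorem stmt_8 (p : ℕ) [Fact p.Prime] (f n : ℕ) (hf : 1 ≤ f) (hn : 1 ≤ n)
    (γ : PadicInt p) (hγu : IsUnit γ) (z : ℤ)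
    (hγ : ((p : PadicInt p) ^ (n + 1)) ∣ (γ - (1 + (z : PadicInt p) * (p : PadicInt p) ^ n)))
    (lam : PowerSeries (ZMod p))
    (hlam0 : PowerSeries.constantCoeff lam = 1)
    (hlam : lam ^ ((p ^ f - 1) / (p - 1)) *
        (PowerSeries.C (PadicInt.toZMod γ) * PowerSeries.X)
      = binomSeries (ZMod p) p γ - 1) :
    ∃ g : PowerSeries (ZMod p),
      lam = 1 + PowerSeries.C (z : ZMod p) * PowerSeries.X ^ (p ^ n - 1)
          + PowerSeries.C (z : ZMod p) * PowerSeries.X ^ (p ^ n)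
          + PowerSeries.X ^ (2 * p ^ n - 2) * g := by
  classical
  have hp : Fact (Nat.Prime p) := inferInstance
  haveI : NeZero p := ⟨hp.out.pos.ne'⟩
  have hp2 : 2 ≤ p := hp.out.two_le
  have hPn : 2 ≤ p ^ n := by
    calc 2 ≤ p := hp2
      _ = p ^ 1 := (pow_one p).symm
      _ ≤ p ^ n := Nat.pow_le_pow_right (by omega) hn
  obtain ⟨w, hw, hwW⟩ : ∃ w : ℕ, w < p ∧ ((w : ZMod p)) = ((z : ZMod p)) :=
    ⟨(ZMod.val ((z : ZMod p))), ZMod.val_lt _, ZMod.natCast_rightInverse _⟩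
  have hzw : ((p : ℤ)) ∣ (z - (w : ℤ)) := by
    have hcast : (((z - (w : ℤ)) : ℤ) : ZMod p) = 0 := by
      push_cast [hwW]
      ring
    exact (ZMod.intCast_zmod_eq_zero_iff_dvd _ _).mp hcast
  set M : ℕ := 1 + w * p ^ n with hMdef
  have hppow : p ^ (n + 1) = p * p ^ n := by rw [pow_succ']
  have hgM : ((p : PadicInt p)) ^ (n + 1) ∣ (γ - (M : PadicInt p)) := by
    have key : (γ - (M : PadicInt p)) =
        (γ - (1 + (z : PadicInt p) * (p : PadicInt p) ^ n))
          + ((z - (w : ℤ) : ℤ) : PadicInt p) * (p : PadicInt p) ^ n := by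
      push_cast [hMdef]
      ring
    rw [key]
    refine dvd_add hγ ?_
    obtain ⟨t, ht⟩ := hzw
    rw [ht]
    exact ⟨(t : PadicInt p), by push_cast; ring⟩
  have hB : ∀ k, k < 2 * p ^ n - 1 →
      (PowerSeries.coeff k (binomSeries (ZMod p) p γ)) = ((M.choose k : ZMod p)) := by
    intro k hk
    rw [binomSeries, PowerSeries.coeff_mk]
    set c := min (k + 1) (n + 1) with hc
    have hmodeq : γ.appr (k + 1) ≡ M [MOD p ^ c] :=
      appr_modeq γ M c (k + 1) (min_le_left _ _)
        (dvd_trans (pow_dvd_pow _ (min_le_right _ _)) hgM)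
    have hkc : k < p ^ c := by
      by_cases hmin : k + 1 ≤ n + 1
      · rw [hc, min_eq_left hmin]
        calc k < p ^ k := Nat.lt_pow_self hp.out.one_lt
          _ ≤ p ^ (k + 1) := Nat.pow_le_pow_right (by omega) (by omega)
      · rw [hc, min_eq_right (by omega)]
        have h2 : 2 * p ^ n ≤ p * p ^ n := Nat.mul_le_mul_right _ hp2
        omega
    exact chsub c _ M k hkc hmodeq
  have hMlt : M < p ^ (n + 1) := by
    have h1 : w * p ^ n ≤ (p - 1) * p ^ n := Nat.mul_le_mul_right _ (by omega)
    have h2 : (p - 1) * p ^ n = p * p ^ n - p ^ n := by rw [Nat.sub_mul, one_mul]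
    have h3 : p ^ n ≤ p * p ^ n := Nat.le_mul_of_pos_left _ (by omega)
    omega
  have hBval : ∀ k, k < 2 * p ^ n - 1 →
      (PowerSeries.coeff k (binomSeries (ZMod p) p γ)) =
        if k = 0 ∨ k = 1 then 1
        else if k = p ^ n ∨ k = p ^ n + 1 then ((z : ZMod p)) else 0 := by
    intro k hk
    rw [hB k hk, llem n M k w hn hw (by rw [Nat.mod_eq_of_lt hMlt]) hk, hwW]
  have hg1 : PadicInt.toZMod γ = 1 := by
    obtain ⟨t, ht⟩ := hγ
    have hγeq : γ = 1 + (z : PadicInt p) * (p : PadicInt p) ^ n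
        + (p : PadicInt p) ^ (n + 1) * t := by
      have h := eq_add_of_sub_eq ht
      rw [h]; ring
    have happ := congrArg PadicInt.toZMod hγeq
    rw [map_add, map_add, map_mul, map_mul, map_pow, map_pow, map_one, map_intCast,
      map_natCast, ZMod.natCast_self, zero_pow (by omega : n ≠ 0),
      zero_pow (by omega : n + 1 ≠ 0)] at happ
    rw [happ]; ring
  rw [hg1, map_one, one_mul] at hlam
  set e := (p ^ f - 1) / (p - 1) with he_def
  have he_sum : e = ∑ i ∈ Finset.range f, p ^ i := by
    rw [he_def, ← geom_nat p (by omega) f, Nat.mul_div_cancel_left _ (by omega : 0 < p - 1)]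
  have hecastZ : ((e : ℕ) : ZMod p) = 1 := by
    rw [he_sum]
    push_cast
    have hterm : ∀ i ∈ Finset.range f, ((p : ZMod p)) ^ i
        = if i = 0 then (1 : ZMod p) else 0 := by
      intro i _
      rw [ZMod.natCast_self]
      by_cases h : i = 0
      · simp [h]
      · simp [h, zero_pow h]
    rw [Finset.sum_congr rfl hterm,
      Finset.sum_ite_eq' (Finset.range f) 0 (fun _ => (1 : ZMod p)),
      if_pos (Finset.mem_range.mpr (by omega))]
  have hecastPS : ((e : ℕ) : PowerSeries (ZMod p)) = 1 := by
    rw [← map_natCast PowerSeries.C e, hecastZ, map_one]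
  have hE : ∀ k, PowerSeries.coeff k (lam ^ e) =
      PowerSeries.coeff (k + 1) (binomSeries (ZMod p) p γ) := by
    intro k
    have h := congrArg (PowerSeries.coeff (k + 1)) hlam
    rw [PowerSeries.coeff_succ_mul_X] at h
    rw [h, map_sub]
    have h1 : PowerSeries.coeff (k + 1) (1 : PowerSeries (ZMod p)) = 0 := by
      simp [PowerSeries.coeff_one]
    rw [h1, sub_zero]
  obtain ⟨cc, hcc⟩ := pow_expand (lam - 1) e
  rw [(by ring : (1 : PowerSeries (ZMod p)) + (lam - 1) = lam), hecastPS, one_mul] at hcc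
  have hcoefsq : ∀ a : ℕ, (X : PowerSeries (ZMod p)) ^ a ∣ (lam - 1) →
      ∀ k, k < 2 * a → PowerSeries.coeff k ((lam - 1) ^ 2 * cc) = 0 := by
    intro a ha k hk
    have hdvd : (X : PowerSeries (ZMod p)) ^ (2 * a) ∣ (lam - 1) ^ 2 * cc := by
      have h1 : ((X : PowerSeries (ZMod p)) ^ a) ^ 2 ∣ (lam - 1) ^ 2 :=
        pow_dvd_pow_of_dvd ha 2
      have h2 : (X : PowerSeries (ZMod p)) ^ (2 * a)
          = ((X : PowerSeries (ZMod p)) ^ a) ^ 2 := by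
        rw [← pow_mul, Nat.mul_comm]
      rw [h2]
      exact Dvd.dvd.mul_right h1 cc
    exact PowerSeries.X_pow_dvd_iff.mp hdvd k hk
  have hord : ∀ j, j < p ^ n - 1 → PowerSeries.coeff j (lam - 1) = 0 := by
    intro j
    induction j using Nat.strong_induction_on with
    | _ j ih =>
      intro hj
      by_cases hj0 : j = 0
      · subst hj0
        simp [map_sub, PowerSeries.coeff_zero_eq_constantCoeff, hlam0]
      · have hdvd : (X : PowerSeries (ZMod p)) ^ j ∣ (lam - 1) :=
          PowerSeries.X_pow_dvd_iff.mpr (fun m hm => ih m hm (by omega))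
        have h2 : PowerSeries.coeff j ((lam - 1) ^ 2 * cc) = 0 :=
          hcoefsq j hdvd j (by omega)
        have h3 := hE j
        rw [hBval (j + 1) (by omega)] at h3
        rw [hcc, map_add, map_add, h2, add_zero] at h3
        have h4 : PowerSeries.coeff j (1 : PowerSeries (ZMod p)) = 0 := by
          simp [PowerSeries.coeff_one, hj0]
        rw [h4, zero_add] at h3
        rw [h3, if_neg (by omega), if_neg (by omega)]
  have hdvd1 : (X : PowerSeries (ZMod p)) ^ (p ^ n - 1) ∣ (lam - 1) :=
    PowerSeries.X_pow_dvd_iff.mpr hord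
  have hD : (X : PowerSeries (ZMod p)) ^ (2 * p ^ n - 2) ∣
      (lam - (1 + PowerSeries.C ((z : ZMod p)) * X ^ (p ^ n - 1)
        + PowerSeries.C ((z : ZMod p)) * X ^ (p ^ n))) := by
    refine PowerSeries.X_pow_dvd_iff.mpr (fun k hk => ?_)
    have hsq : PowerSeries.coeff k ((lam - 1) ^ 2 * cc) = 0 :=
      hcoefsq (p ^ n - 1) hdvd1 k (by omega)
    have hlameq : lam = lam ^ e - (lam - 1) ^ 2 * cc := by rw [hcc]; ring
    have h3 := hE k
    rw [hBval (k + 1) (by omega)] at h3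
    have hck : PowerSeries.coeff k lam =
        (if k + 1 = 0 ∨ k + 1 = 1 then 1
         else if k + 1 = p ^ n ∨ k + 1 = p ^ n + 1 then ((z : ZMod p)) else 0) := by
      conv_lhs => rw [hlameq]
      rw [map_sub, hsq, sub_zero, h3]
    rw [map_sub, hck, map_add, map_add, PowerSeries.coeff_one,
      PowerSeries.coeff_C_mul, PowerSeries.coeff_C_mul,
      PowerSeries.coeff_X_pow, PowerSeries.coeff_X_pow]
    have hfalse : (k + 1 = 0) = False := eq_false (by omega)
    simp only [hfalse, false_or]
    split_ifs <;> first | exact (by omega : False).elim | ring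
  obtain ⟨g, hg⟩ := hD
  exact ⟨g, by linear_combination hg⟩
end
end

section
/- Let p = 2, f ≥ 1, and let η ∈ ℤ_2^× with η = −1 (so the action is γ(π) = (1+π)^{−1} − 1). Let λ_η ∈ 1 + π𝔽_2[[π]] be the unique (2^f−1)-st root of η(π)/π = (1+π)^{−1}. Then λ_η ≡ 1 + π mod π^{2^f}·𝔽_2[[π]]. Moreover, if γ ∈ ℤ_2^× satisfies γ ≡ 1 mod 4, then the corresponding λ_γ (the unique (2^f−1)-st root of ((1+π)^γ − 1)/π) satisfies λ_γ ≡ 1 mod π^3·𝔽_2[[π]]. -/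
noncomputable section

open PowerSeries

instance : CharP (PowerSeries (ZMod 2)) 2 :=
  charP_of_injective_ringHom (f := (PowerSeries.C (R := ZMod 2)))
    (fun a b h => by simpa using congrArg (PowerSeries.constantCoeff) h) 2

/-- Odd-power cancellation in `F_2[[X]]`. -/
lemma aux_odd_pow_dvd (m N : ℕ) (hm : m % 2 = 1) (a b : PowerSeries (ZMod 2))
    (ha : constantCoeff a = 1) (hb : constantCoeff b = 1)
    (h : (X : PowerSeries (ZMod 2)) ^ N ∣ a ^ m - b ^ m) :
    (X : PowerSeries (ZMod 2)) ^ N ∣ a - b := by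
  have key := geom_sum₂_mul a b m
  set c := ∑ i ∈ Finset.range m, a ^ i * b ^ (m - 1 - i) with hc
  have hcu : IsUnit c := by
    rw [PowerSeries.isUnit_iff_constantCoeff, hc]
    have : constantCoeff c = (m : ZMod 2) := by
      rw [hc, map_sum]
      simp [map_pow, ha, hb]
    rw [hc] at this
    rw [this]
    have : (m : ZMod 2) = 1 := by
      have h2 : (2 : ZMod 2) = 0 := by decide
      rw [← Nat.mod_add_div m 2, hm]; push_cast; rw [h2]; ring
    rw [this]; exact isUnit_one
  rw [← key] at h
  exact hcu.dvd_mul_left.mp h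

lemma aux_appr_neg_one (n : ℕ) : (-1 : PadicInt 2).appr (n + 1) = 2 ^ (n + 1) - 1 := by
  have h1 : (((-1 : PadicInt 2).appr (n + 1) : ZMod (2 ^ (n + 1)))) =
      PadicInt.toZModPow (n + 1) (-1) := rfl
  have h2 : PadicInt.toZModPow (n + 1) (-1 : PadicInt 2) = -1 := by simp
  have h3 := ZMod.val_cast_of_lt ((-1 : PadicInt 2).appr_lt (n + 1))
  rw [h1, h2] at h3
  have h4 : (-1 : ZMod (2 ^ (n + 1))).val = 2 ^ (n + 1) - 1 := by
    have hpos : 0 < 2 ^ (n + 1) := Nat.pow_pos (by norm_num)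
    obtain ⟨k, hk⟩ := Nat.exists_eq_succ_of_ne_zero hpos.ne'
    rw [hk] at *
    simp [ZMod.val_neg_one k]
  omega

lemma aux_choose_odd (k n : ℕ) (hn : n < 2 ^ k) : (((2 ^ k - 1).choose n : ZMod 2)) = 1 := by
  induction n with
  | zero => simp
  | succ n ih =>
    have hn' : n < 2 ^ k := by omega
    rcases Nat.lt_or_ge (n + 1) (2 ^ k) with h | h
    · have h1 : (2 ^ k).choose (n + 1) = (2 ^ k - 1).choose n + (2 ^ k - 1).choose (n + 1) := by
        have : 2 ^ k = (2 ^ k - 1) + 1 := by omega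
        rw [this, Nat.choose_succ_succ]; simp
      have h2 : (2 : ℕ) ∣ (2 ^ k).choose (n + 1) :=
        Nat.Prime.dvd_choose_pow Nat.prime_two (Nat.succ_ne_zero n) (by omega)
      have h3 : (((2 ^ k).choose (n + 1) : ZMod 2)) = 0 :=
        (ZMod.natCast_eq_zero_iff _ _).mpr h2
      rw [h1] at h3
      push_cast at h3
      rw [ih hn'] at h3
      have : ((2 ^ k - 1).choose (n + 1) : ZMod 2) = -1 := by linear_combination h3
      rw [this]; decide
    · omega

lemma aux_G_coeff (n : ℕ) :
    PowerSeries.coeff n (binomSeries (ZMod 2) 2 (-1)) = 1 := by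
  rw [binomSeries, PowerSeries.coeff_mk, aux_appr_neg_one]
  exact aux_choose_odd (n + 1) n
    (lt_of_lt_of_le (Nat.lt_two_pow_self (n := n)) (Nat.pow_le_pow_right (by norm_num) (Nat.le_succ n)))

lemma aux_G_mul :
    (1 + (X : PowerSeries (ZMod 2))) * binomSeries (ZMod 2) 2 (-1) = 1 := by
  ext n
  rw [add_mul, one_mul, map_add]
  cases n with
  | zero =>
    simp [aux_G_coeff 0, PowerSeries.coeff_zero_eq_constantCoeff, map_mul]
  | succ n =>
    rw [PowerSeries.coeff_succ_X_mul, aux_G_coeff, aux_G_coeff, PowerSeries.coeff_one]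
    simp only [Nat.succ_ne_zero, if_false]
    decide

lemma aux_appr_mod (γ : PadicInt 2) (hγ : (4 : PadicInt 2) ∣ (γ - 1)) (n : ℕ) (hn : 2 ≤ n) :
    γ.appr n % 4 = 1 := by
  have h1 : ((γ.appr n : ZMod (2 ^ n))) = PadicInt.toZModPow n γ := rfl
  have h2 : PadicInt.toZModPow 2 γ = 1 := by
    obtain ⟨δ, hδ⟩ := hγ
    have hγ' : γ = 1 + 4 * δ := by linear_combination hδ
    have h4 : PadicInt.toZModPow 2 (4 : PadicInt 2) = 0 := by
      rw [show (4 : PadicInt 2) = ((4 : ℕ) : PadicInt 2) by norm_num, map_natCast]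
      decide
    rw [hγ', map_add, map_mul, map_one, h4, zero_mul, add_zero]
  have h3 : ((γ.appr n : ZMod (2 ^ 2))) = 1 := by
    rw [← ZMod.cast_natCast (pow_dvd_pow 2 hn) (γ.appr n), h1,
      PadicInt.cast_toZModPow 2 n hn, h2]
  have h5 : γ.appr n ≡ 1 [MOD 2 ^ 2] := by
    have := (ZMod.natCast_eq_natCast_iff (γ.appr n) 1 (2 ^ 2)).mp (by simpa using h3)
    exact this
  have h6 : γ.appr n % 4 = 1 % 4 := h5
  omega

/-- Lemma `p2lambda`: for `p = 2`, `λ_η ≡ 1 + π mod π^{2^f}` where `η = -1`,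
and `λ_γ ≡ 1 mod π³` for `γ ≡ 1 mod 4`. -/
theorem stmt_9 (f : ℕ) (hf : 1 ≤ f)
    (lam : PowerSeries (ZMod 2))
    (hlam0 : PowerSeries.constantCoeff lam = 1)
    (hlam : lam ^ (2 ^ f - 1) * PowerSeries.X = binomSeries (ZMod 2) 2 (-1) - 1) :
    (∃ g : PowerSeries (ZMod 2),
      lam = 1 + PowerSeries.X + PowerSeries.X ^ (2 ^ f) * g) ∧
    (∀ γ : PadicInt 2, (4 : PadicInt 2) ∣ (γ - 1) →
      ∀ μ : PowerSeries (ZMod 2), PowerSeries.constantCoeff μ = 1 →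
        μ ^ (2 ^ f - 1) * PowerSeries.X = binomSeries (ZMod 2) 2 γ - 1 →
        ∃ g : PowerSeries (ZMod 2), μ = 1 + PowerSeries.X ^ 3 * g) := by
  classical
  have hXne : (X : PowerSeries (ZMod 2)) ≠ 0 := PowerSeries.X_ne_zero
  set m := 2 ^ f - 1 with hmdef
  have hm1 : m + 1 = 2 ^ f := Nat.sub_add_cancel Nat.one_le_two_pow
  have hmodd : m % 2 = 1 := by
    obtain ⟨t, ht⟩ := dvd_pow_self 2 (show f ≠ 0 by omega)
    have : 1 ≤ 2 ^ f := Nat.one_le_two_pow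
    omega
  constructor
  · -- part 1
    have hG := aux_G_mul
    have h1 : lam ^ m * (1 + X) = 1 := by
      apply mul_right_cancel₀ hXne
      calc lam ^ m * (1 + X) * X = (lam ^ m * X) * (1 + X) := by ring
        _ = (binomSeries (ZMod 2) 2 (-1) - 1) * (1 + X) := by rw [hlam]
        _ = (1 + X) * binomSeries (ZMod 2) 2 (-1) - (1 + X) := by ring
        _ = -X := by rw [hG]; ring
        _ = X := CharTwo.neg_eq X
        _ = 1 * X := (one_mul _).symm
    have h2 : ((1 : PowerSeries (ZMod 2)) + X) ^ m * (1 + X) = 1 + X ^ (2 ^ f) := by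
      rw [← pow_succ, hm1, add_pow_char_pow, one_pow]
    have hu : IsUnit (1 + (X : PowerSeries (ZMod 2))) := by
      rw [PowerSeries.isUnit_iff_constantCoeff]; simp
    have heq : (lam ^ m - (1 + X) ^ m) * (1 + X) = -X ^ (2 ^ f) := by
      rw [sub_mul, h1, h2]; ring
    have hd : (X : PowerSeries (ZMod 2)) ^ (2 ^ f) ∣ lam ^ m - (1 + X) ^ m := by
      rw [← hu.dvd_mul_right, heq]
      exact dvd_neg.mpr dvd_rfl
    obtain ⟨g, hg⟩ := aux_odd_pow_dvd m (2 ^ f) hmodd lam (1 + X) hlam0 (by simp) hd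
    exact ⟨g, by linear_combination hg⟩
  · -- part 2
    intro γ hγ μ hμ0 hμ
    set B := binomSeries (ZMod 2) 2 γ with hB
    have hq2 := aux_appr_mod γ hγ 2 le_rfl
    have hq3 := aux_appr_mod γ hγ 3 (by norm_num)
    have hq4 := aux_appr_mod γ hγ 4 (by norm_num)
    have hq3lt : γ.appr 3 < 8 := γ.appr_lt 3
    have hq4lt : γ.appr 4 < 16 := γ.appr_lt 4
    have hc0 : PowerSeries.coeff 0 B = 1 := by
      rw [hB, binomSeries, PowerSeries.coeff_mk]; simp
    have hc1 : PowerSeries.coeff 1 B = 1 := by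
      rw [hB, binomSeries, PowerSeries.coeff_mk, Nat.choose_one_right,
        ← ZMod.natCast_mod]
      have : γ.appr 2 % 2 = 1 := by omega
      rw [this]; rfl
    have hc2 : PowerSeries.coeff 2 B = 0 := by
      rw [hB, binomSeries, PowerSeries.coeff_mk]
      have : γ.appr 3 = 1 ∨ γ.appr 3 = 5 := by omega
      rcases this with h | h <;> rw [h] <;> decide
    have hc3 : PowerSeries.coeff 3 B = 0 := by
      rw [hB, binomSeries, PowerSeries.coeff_mk]
      have : γ.appr 4 = 1 ∨ γ.appr 4 = 5 ∨ γ.appr 4 = 9 ∨ γ.appr 4 = 13 := by omega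
      rcases this with h | h | h | h <;> rw [h] <;> decide
    have hX4 : (X : PowerSeries (ZMod 2)) ^ 4 ∣ B - 1 - X := by
      rw [PowerSeries.X_pow_dvd_iff]
      intro k hk
      interval_cases k <;>
        simp [map_sub, hc0, hc1, hc2, hc3, PowerSeries.coeff_one, PowerSeries.coeff_X]
    obtain ⟨g, hg⟩ := hX4
    have h5 : μ ^ m - 1 = X ^ 3 * g := by
      apply mul_right_cancel₀ hXne
      calc (μ ^ m - 1) * X = μ ^ m * X - X := by ring
        _ = B - 1 - X := by rw [hμ]
        _ = X ^ 4 * g := hg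
        _ = X ^ 3 * g * X := by ring
    have hd : (X : PowerSeries (ZMod 2)) ^ 3 ∣ μ ^ m - 1 ^ m := by
      rw [one_pow, h5]; exact Dvd.intro g rfl
    obtain ⟨g', hg'⟩ := aux_odd_pow_dvd m 3 hmodd μ 1 hμ0 (map_one _) hd
    exact ⟨g', by linear_combination hg'⟩
end
end

section
/- Let p be a prime, F a field of characteristic p, and Γ a group acting on F((π)) by γ(π) = (1+π)^{χ(γ)} − 1 for a character χ: Γ → ℤ_p^×. For γ ∈ Γ let λ_γ ∈ 1 + πF[[π]] be the unique (p^f−1)/(p−1)-th root of γ(π)/(χ̄(γ)π) with constant term 1. Then the map γ ↦ λ_γ satisfies the cocycle relation λ_{γγ′} = λ_γ · γ(λ_{γ′}) for all γ, γ′ ∈ Γ. -/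
noncomputable section

open PowerSeries

section Aux
open Finset
variable {F : Type} [Field F] {p : ℕ} [Fact p.Prime] [CharP F p]


variable {F : Type} [Field F]

lemma coeff_pow_zero_of_lt {g : PowerSeries F} (hg : constantCoeff g = 0)
    {n k : ℕ} (h : n < k) : coeff n (g ^ k) = 0 := by
  have hX : (X : PowerSeries F) ∣ g := PowerSeries.X_dvd_iff.mpr hg
  have : (X : PowerSeries F) ^ k ∣ g ^ k := pow_dvd_pow_of_dvd hX k
  exact (PowerSeries.X_pow_dvd_iff.mp this) n h


lemma coeff_pcomp (u g : PowerSeries F) (n : ℕ) :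
    coeff n (pcomp F u g) = ∑ k ∈ range (n + 1), coeff k u * coeff n (g ^ k) := by
  simp [pcomp]

-- combinatorial: triangle sum = square sum when h vanishes above antidiagonal n
lemma tri_eq_square (h : ℕ → ℕ → F) (n : ℕ)
    (hv : ∀ i j, n < i + j → h i j = 0) :
    ∑ k ∈ range (n + 1), ∑ ij ∈ Finset.HasAntidiagonal.antidiagonal k, h ij.1 ij.2
      = ∑ i ∈ range (n + 1), ∑ j ∈ range (n + 1), h i j := by
  classical
  rw [← Finset.sum_product']
  rw [← Finset.sum_biUnion]
  · apply Finset.sum_subset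
    · intro p hp
      simp only [Finset.mem_biUnion, mem_range, Finset.HasAntidiagonal.mem_antidiagonal] at hp
      obtain ⟨k, hk, hpk⟩ := hp
      simp only [Finset.mem_product, mem_range]
      omega
    · intro p hp hnp
      apply hv
      simp only [Finset.mem_biUnion, mem_range, Finset.HasAntidiagonal.mem_antidiagonal] at hnp
      push_neg at hnp
      by_contra hc
      push_neg at hc
      exact absurd (hnp (p.1 + p.2) (by omega)) (by simp)
  · intro a _ b _ hab
    simp only [Finset.disjoint_left, Finset.HasAntidiagonal.mem_antidiagonal]
    intro p hpa hpb
    exact hab (hpa ▸ hpb ▸ rfl)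

lemma pcomp_mul (u v g : PowerSeries F) (hg : constantCoeff g = 0) :
    pcomp F (u * v) g = pcomp F u g * pcomp F v g := by
  ext n
  rw [coeff_pcomp, PowerSeries.coeff_mul]
  have hL : ∑ k ∈ range (n+1), coeff k (u*v) * coeff n (g^k)
      = ∑ i ∈ range (n+1), ∑ j ∈ range (n+1),
          (coeff i u * coeff j v) * coeff n (g^(i+j)) := by
    rw [← tri_eq_square (fun i j => (coeff i u * coeff j v) * coeff n (g^(i+j))) n
      (fun i j hij => by rw [coeff_pow_zero_of_lt hg hij, mul_zero])]
    refine Finset.sum_congr rfl fun k hk => ?_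
    rw [PowerSeries.coeff_mul, Finset.sum_mul]
    refine Finset.sum_congr rfl fun ij hij => ?_
    rw [Finset.HasAntidiagonal.mem_antidiagonal] at hij
    rw [hij]
  rw [hL]
  symm
  have hext : ∀ (w : PowerSeries F) (m : ℕ), m ≤ n →
      coeff m (pcomp F w g) = ∑ i ∈ range (n+1), coeff i w * coeff m (g^i) := by
    intro w m hm
    rw [coeff_pcomp]
    apply Finset.sum_subset (Finset.range_subset_range.mpr (by omega))
    intro i _ hi
    rw [mem_range, not_lt] at hi
    rw [coeff_pow_zero_of_lt hg (by omega), mul_zero]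
  calc ∑ p ∈ Finset.HasAntidiagonal.antidiagonal n, coeff p.1 (pcomp F u g) * coeff p.2 (pcomp F v g)
      = ∑ p ∈ Finset.HasAntidiagonal.antidiagonal n, ∑ i ∈ range (n+1), ∑ j ∈ range (n+1),
          (coeff i u * coeff p.1 (g^i)) * (coeff j v * coeff p.2 (g^j)) := by
        refine Finset.sum_congr rfl fun p hp => ?_
        rw [Finset.HasAntidiagonal.mem_antidiagonal] at hp
        rw [hext u p.1 (by omega), hext v p.2 (by omega), Finset.sum_mul_sum]
    _ = ∑ i ∈ range (n+1), ∑ j ∈ range (n+1), ∑ p ∈ Finset.HasAntidiagonal.antidiagonal n,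
          (coeff i u * coeff p.1 (g^i)) * (coeff j v * coeff p.2 (g^j)) := by
        rw [Finset.sum_comm]
        exact Finset.sum_congr rfl fun i _ => Finset.sum_comm
    _ = ∑ i ∈ range (n+1), ∑ j ∈ range (n+1),
          (coeff i u * coeff j v) * coeff n (g^(i+j)) := by
        refine Finset.sum_congr rfl fun i _ => Finset.sum_congr rfl fun j _ => ?_
        rw [pow_add, PowerSeries.coeff_mul, Finset.mul_sum]
        refine Finset.sum_congr rfl fun p hp => ?_
        ring

lemma pcomp_add (u v g : PowerSeries F) :
    pcomp F (u + v) g = pcomp F u g + pcomp F v g := by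
  ext n
  rw [map_add, coeff_pcomp, coeff_pcomp, coeff_pcomp, ← Finset.sum_add_distrib]
  exact Finset.sum_congr rfl fun k _ => by rw [map_add, add_mul]

lemma pcomp_C (r : F) (g : PowerSeries F) : pcomp F (PowerSeries.C r) g = PowerSeries.C r := by
  ext n
  rw [coeff_pcomp]
  rcases Nat.eq_zero_or_pos n with h | h
  · subst h; simp
  · rw [Finset.sum_eq_single 0]
    · simp [PowerSeries.coeff_C, h.ne']
    · intro k hk hk0
      simp [PowerSeries.coeff_C, hk0]
    · simp

lemma pcomp_one (g : PowerSeries F) : pcomp F 1 g = 1 := by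
  simpa using pcomp_C (1 : F) g

lemma pcomp_pow (u g : PowerSeries F) (hg : constantCoeff g = 0) (m : ℕ) :
    pcomp F (u ^ m) g = pcomp F u g ^ m := by
  induction m with
  | zero => simpa using pcomp_one g
  | succ m ih => rw [pow_succ, pow_succ, pcomp_mul _ _ _ hg, ih]

lemma pcomp_sub (u v g : PowerSeries F) :
    pcomp F (u - v) g = pcomp F u g - pcomp F v g := by
  have := pcomp_add (u - v) v g
  rw [sub_add_cancel] at this
  rw [this]; ring

lemma pcomp_X (g : PowerSeries F) (hg : constantCoeff g = 0) :
    pcomp F PowerSeries.X g = g := by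
  ext n
  rw [coeff_pcomp]
  rcases Nat.eq_zero_or_pos n with h | h
  · subst h
    simp only [Finset.range_one, Finset.sum_singleton, pow_zero, PowerSeries.coeff_X]
    rw [← PowerSeries.coeff_zero_eq_constantCoeff] at hg
    simp [hg]
  · rw [Finset.sum_eq_single 1]
    · simp
    · intro k hk hk1
      simp [PowerSeries.coeff_X, hk1]
    · intro h1
      exfalso; exact h1 (Finset.mem_range.mpr (by omega))

lemma constantCoeff_pcomp (u g : PowerSeries F) :
    constantCoeff (pcomp F u g) = constantCoeff u := by
  rw [← PowerSeries.coeff_zero_eq_constantCoeff, coeff_pcomp]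
  simp


variable {F : Type} [Field F] {p : ℕ} [Fact p.Prime] [CharP F p]

lemma coeff_oneX_pow (m k : ℕ) :
    coeff k ((1 + X : PowerSeries F) ^ m) = (m.choose k : F) := by
  rw [← Polynomial.coe_one, ← Polynomial.coe_X, ← Polynomial.coe_add, ← Polynomial.coe_pow,
    Polynomial.coeff_coe, Polynomial.coeff_one_add_X_pow]

instance psCharP : CharP (PowerSeries F) p :=
  charP_of_injective_ringHom (PowerSeries.C_injective (R := F)) p

lemma choose_congr {a b n k : ℕ} (hab : a ≡ b [MOD p ^ (n + 1)]) (hk : k ≤ n) :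
    ((a.choose k : F)) = (b.choose k : F) := by
  -- suffices coeff equality of (1+X)^a, (1+X)^b
  suffices h : coeff k ((1 + X : PowerSeries F) ^ a) = coeff k ((1 + X : PowerSeries F) ^ b) by
    rwa [coeff_oneX_pow, coeff_oneX_pow] at h
  -- wlog a ≤ b
  have key : ∀ a t : ℕ, coeff k ((1 + X : PowerSeries F) ^ a)
      = coeff k ((1 + X : PowerSeries F) ^ (a + p ^ (n + 1) * t)) := by
    intro a t
    have h1 : ((1 + X : PowerSeries F)) ^ (p ^ (n + 1)) = 1 + X ^ (p ^ (n + 1)) := by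
      rw [add_pow_char_pow, one_pow]
    have h2 : (X : PowerSeries F) ^ (p ^ (n + 1)) ∣
        ((1 + X : PowerSeries F) ^ (a + p ^ (n + 1) * t) - (1 + X) ^ a) := by
      have : (1 + X : PowerSeries F) ^ (a + p ^ (n + 1) * t) - (1 + X) ^ a
          = (1 + X) ^ a * ((1 + X ^ (p ^ (n + 1))) ^ t - 1) := by
        rw [pow_add, pow_mul, h1]; ring
      rw [this]
      refine Dvd.dvd.mul_left ?_ _
      have := sub_dvd_pow_sub_pow (1 + (X : PowerSeries F) ^ (p ^ (n + 1))) 1 t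
      simpa using this
    have h3 : coeff k ((1 + X : PowerSeries F) ^ (a + p ^ (n + 1) * t) - (1 + X) ^ a) = 0 := by
      refine PowerSeries.X_pow_dvd_iff.mp h2 k ?_
      calc k ≤ n := hk
        _ < p ^ n := Nat.lt_pow_self (Fact.out : p.Prime).one_lt
        _ ≤ p ^ (n + 1) := Nat.pow_le_pow_right (Fact.out : p.Prime).one_lt.le (Nat.le_succ n)
    rw [map_sub, sub_eq_zero] at h3
    exact h3.symm
  rcases le_total a b with h | h
  · obtain ⟨t, ht⟩ := (Nat.modEq_iff_dvd' h).mp hab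
    have hb : b = a + p ^ (n + 1) * t := by omega
    rw [key a t, ← hb]
  · obtain ⟨t, ht⟩ := (Nat.modEq_iff_dvd' h).mp hab.symm
    have ha : a = b + p ^ (n + 1) * t := by omega
    rw [key b t, ← ha]


lemma coeff_binom (c : PadicInt p) (a n k : ℕ)
    (h : c - (a : PadicInt p) ∈ Ideal.span {(p : PadicInt p) ^ (n + 1)}) (hk : k ≤ n) :
    coeff k (binomSeries F p c) = (a.choose k : F) := by
  rw [binomSeries, PowerSeries.coeff_mk]
  have h1 := PadicInt.appr_spec (k + 1) c
  have h2 : c - (a : PadicInt p) ∈ Ideal.span {(p : PadicInt p) ^ (k + 1)} := by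
    rw [Ideal.mem_span_singleton] at h ⊢
    exact dvd_trans (pow_dvd_pow _ (by omega)) h
  have h3 := PadicInt.zmod_congr_of_sub_mem_span (k + 1) c (c.appr (k + 1)) a h1 h2
  have h4 : c.appr (k + 1) ≡ a [MOD p ^ (k + 1)] := (ZMod.natCast_eq_natCast_iff _ _ _).mp h3
  exact choose_congr h4 (le_refl k)

lemma binom_sub_dvd (c : PadicInt p) (a n : ℕ)
    (h : c - (a : PadicInt p) ∈ Ideal.span {(p : PadicInt p) ^ (n + 1)}) :
    (X : PowerSeries F) ^ (n + 1) ∣ binomSeries F p c - (1 + X) ^ a := by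
  rw [PowerSeries.X_pow_dvd_iff]
  intro m hm
  rw [map_sub, coeff_binom c a n m h (by omega), coeff_oneX_pow, sub_self]

lemma binom_const (c : PadicInt p) : constantCoeff (binomSeries F p c) = 1 := by
  rw [← PowerSeries.coeff_zero_eq_constantCoeff, binomSeries, PowerSeries.coeff_mk]
  simp


variable {F : Type} [Field F] {p : ℕ} [Fact p.Prime] [CharP F p]

lemma q_cast (f : ℕ) (hf : 1 ≤ f) : (((p ^ f - 1) / (p - 1) : ℕ) : F) = 1 := by
  have hp2 : 2 ≤ p := (Fact.out : p.Prime).two_le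
  have h1 : (p - 1) * ∑ i ∈ range f, p ^ i = p ^ f - 1 := by
    have hz : ((p : ℤ) - 1) * ∑ i ∈ range f, (p : ℤ) ^ i = (p : ℤ) ^ f - 1 := by
      rw [mul_comm]; exact geom_sum_mul (p : ℤ) f
    have hpf : 1 ≤ p ^ f := Nat.one_le_pow _ _ (by omega)
    zify [show (1:ℕ) ≤ p by omega, hpf]
    push_cast at hz ⊢
    linarith
  have hgeom : (p ^ f - 1) / (p - 1) = ∑ i ∈ range f, p ^ i := by
    rw [← h1, Nat.mul_div_cancel_left _ (by omega)]
  rw [hgeom, Nat.cast_sum]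
  have hc : ∀ i ∈ range f, ((p ^ i : ℕ) : F) = if i = 0 then 1 else 0 := by
    intro i _
    cases i with
    | zero => simp
    | succ m => push_cast; rw [CharP.cast_eq_zero F p]; simp
  rw [Finset.sum_congr rfl hc, Finset.sum_ite_eq' (range f) 0 (fun _ => (1 : F))]
  rw [if_pos (Finset.mem_range.mpr (by omega))]

lemma pow_root_inj {q : ℕ} (hq : ((q : ℕ) : F) ≠ 0) {a b : PowerSeries F}
    (ha : constantCoeff a = 1) (hb : constantCoeff b = 1) (h : a ^ q = b ^ q) : a = b := by
  have h2 : (∑ i ∈ range q, a ^ i * b ^ (q - 1 - i)) * (a - b) = 0 := by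
    rw [geom_sum₂_mul, h, sub_self]
  have h3 : (∑ i ∈ range q, a ^ i * b ^ (q - 1 - i)) ≠ 0 := by
    intro h0
    apply hq
    have := congrArg (constantCoeff) h0
    rw [map_sum, map_zero] at this
    rw [← this]
    rw [Finset.sum_congr rfl fun i _ => by rw [map_mul, map_pow, map_pow, ha, hb, one_pow,
      one_pow, one_mul]]
    simp
  rcases mul_eq_zero.mp h2 with h4 | h4
  · exact absurd h4 h3
  · exact sub_eq_zero.mp h4


lemma binom_comp (c₁ c₂ : PadicInt p) :
    binomSeries F p (c₁ * c₂) = pcomp F (binomSeries F p c₂) (binomSeries F p c₁ - 1) := by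
  ext n
  set a := c₁.appr (n + 1) with ha_def
  set b := c₂.appr (n + 1) with hb_def
  have ha : c₁ - (a : PadicInt p) ∈ Ideal.span {(p : PadicInt p) ^ (n + 1)} :=
    PadicInt.appr_spec (n + 1) c₁
  have hb : c₂ - (b : PadicInt p) ∈ Ideal.span {(p : PadicInt p) ^ (n + 1)} :=
    PadicInt.appr_spec (n + 1) c₂
  have hab : c₁ * c₂ - ((a * b : ℕ) : PadicInt p) ∈ Ideal.span {(p : PadicInt p) ^ (n + 1)} := by
    have heq : c₁ * c₂ - ((a * b : ℕ) : PadicInt p)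
        = c₁ * (c₂ - (b : PadicInt p)) + (c₁ - (a : PadicInt p)) * (b : PadicInt p) := by
      push_cast; ring
    rw [heq]
    exact Ideal.add_mem _ (Ideal.mul_mem_left _ _ hb) (Ideal.mul_mem_right _ _ ha)
  set g : PowerSeries F := binomSeries F p c₁ - 1 with hg_def
  set ga : PowerSeries F := (1 + X) ^ a - 1 with hga_def
  have hga0 : constantCoeff ga = 0 := by
    rw [hga_def]; simp
  have hdvd : (X : PowerSeries F) ^ (n + 1) ∣ g - ga := by
    have : g - ga = binomSeries F p c₁ - (1 + X) ^ a := by rw [hg_def, hga_def]; ring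
    rw [this]
    exact binom_sub_dvd c₁ a n ha
  -- LHS
  rw [coeff_binom (c₁ * c₂) (a * b) n n hab (le_refl n), coeff_pcomp]
  -- RHS rewrite
  have hstep : ∀ k ∈ range (n + 1),
      coeff k (binomSeries F p c₂) * coeff n (g ^ k)
        = coeff k ((1 + X : PowerSeries F) ^ b) * coeff n (ga ^ k) := by
    intro k hk
    rw [mem_range] at hk
    have h1 : coeff k (binomSeries F p c₂) = (b.choose k : F) :=
      coeff_binom c₂ b n k hb (by omega)
    have h2 : coeff n (g ^ k) = coeff n (ga ^ k) := by
      have : (X : PowerSeries F) ^ (n + 1) ∣ g ^ k - ga ^ k :=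
        dvd_trans hdvd (sub_dvd_pow_sub_pow g ga k)
      have h0 := PowerSeries.X_pow_dvd_iff.mp this n (by omega)
      rw [map_sub, sub_eq_zero] at h0
      exact h0
    rw [h1, h2, coeff_oneX_pow]
  rw [Finset.sum_congr rfl hstep, ← coeff_pcomp]
  have hcomp : pcomp F ((1 + X : PowerSeries F) ^ b) ga = (1 + X : PowerSeries F) ^ (a * b) := by
    rw [pcomp_pow _ _ hga0, pcomp_add, pcomp_one, pcomp_X _ hga0]
    rw [hga_def]
    rw [show (1 : PowerSeries F) + ((1 + X) ^ a - 1) = (1 + X) ^ a by ring, ← pow_mul]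
  rw [hcomp, coeff_oneX_pow]

lemma redF_mul (c₁ c₂ : PadicInt p) :
    redF F p (c₁ * c₂) = redF F p c₁ * redF F p c₂ := by
  simp [redF, map_mul]

lemma redF_ne_zero {c : PadicInt p} (h : IsUnit c) : redF F p c ≠ 0 := by
  have h1 : IsUnit (PadicInt.toZMod c) := h.map _
  have h2 : IsUnit (redF F p c) := h1.map (ZMod.castHom (dvd_refl p) F)
  exact h2.ne_zero

end Aux

/-- the cocycle relation `λ_{γγ'} = λ_γ · γ(λ_{γ'})`. -/
theorem stmt_11 (p : ℕ) [Fact p.Prime] (F : Type) [Field F] [CharP F p] (f : ℕ) (hf : 1 ≤ f)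
    (c₁ c₂ : PadicInt p) (h₁ : IsUnit c₁) (h₂ : IsUnit c₂)
    (l₁ l₂ l₁₂ : PowerSeries F)
    (hl₁0 : PowerSeries.constantCoeff l₁ = 1)
    (hl₁ : l₁ ^ ((p ^ f - 1) / (p - 1)) * (PowerSeries.C (redF F p c₁) * PowerSeries.X)
      = binomSeries F p c₁ - 1)
    (hl₂0 : PowerSeries.constantCoeff l₂ = 1)
    (hl₂ : l₂ ^ ((p ^ f - 1) / (p - 1)) * (PowerSeries.C (redF F p c₂) * PowerSeries.X)
      = binomSeries F p c₂ - 1)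
    (hl₁₂0 : PowerSeries.constantCoeff l₁₂ = 1)
    (hl₁₂ : l₁₂ ^ ((p ^ f - 1) / (p - 1)) *
        (PowerSeries.C (redF F p (c₁ * c₂)) * PowerSeries.X)
      = binomSeries F p (c₁ * c₂) - 1) :
    l₁₂ = l₁ * pcomp F l₂ (binomSeries F p c₁ - 1) := by
  have hqF : (((p ^ f - 1) / (p - 1) : ℕ) : F) = 1 := q_cast f hf
  have hqF' : (((p ^ f - 1) / (p - 1) : ℕ) : F) ≠ 0 := by rw [hqF]; exact one_ne_zero
  have hg0 : constantCoeff (binomSeries F p c₁ - 1) = 0 := by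
    rw [map_sub, binom_const]; simp
  have key : binomSeries F p (c₁ * c₂) - 1
      = pcomp F (binomSeries F p c₂ - 1) (binomSeries F p c₁ - 1) := by
    rw [pcomp_sub, pcomp_one, ← binom_comp]
  rw [← hl₂] at key
  rw [pcomp_mul _ _ _ hg0, pcomp_pow _ _ hg0, pcomp_mul _ _ _ hg0, pcomp_C,
    pcomp_X _ hg0] at key
  rw [← hl₁₂] at key
  set P : PowerSeries F := pcomp F l₂ (binomSeries F p c₁ - 1) with hP_def
  have key3 : l₁₂ ^ ((p ^ f - 1) / (p - 1))
        * (PowerSeries.C (redF F p c₁) * PowerSeries.C (redF F p c₂) * X)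
      = (l₁ * P) ^ ((p ^ f - 1) / (p - 1))
        * (PowerSeries.C (redF F p c₁) * PowerSeries.C (redF F p c₂) * X) := by
    calc l₁₂ ^ ((p ^ f - 1) / (p - 1))
          * (PowerSeries.C (redF F p c₁) * PowerSeries.C (redF F p c₂) * X)
        = l₁₂ ^ ((p ^ f - 1) / (p - 1))
          * (PowerSeries.C (redF F p (c₁ * c₂)) * X) := by
          rw [redF_mul, map_mul]
      _ = P ^ ((p ^ f - 1) / (p - 1)) * (PowerSeries.C (redF F p c₂)
            * (binomSeries F p c₁ - 1)) := key
      _ = P ^ ((p ^ f - 1) / (p - 1)) * (PowerSeries.C (redF F p c₂)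
            * (l₁ ^ ((p ^ f - 1) / (p - 1)) * (PowerSeries.C (redF F p c₁) * X))) := by
          rw [hl₁]
      _ = (l₁ * P) ^ ((p ^ f - 1) / (p - 1))
          * (PowerSeries.C (redF F p c₁) * PowerSeries.C (redF F p c₂) * X) := by
          rw [mul_pow]; ring
  have hW : (PowerSeries.C (redF F p c₁) * PowerSeries.C (redF F p c₂) * X
      : PowerSeries F) ≠ 0 := by
    refine mul_ne_zero (mul_ne_zero ?_ ?_) PowerSeries.X_ne_zero
    · intro hC
      exact redF_ne_zero h₁ (by simpa using hC)
    · intro hC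
      exact redF_ne_zero h₂ (by simpa using hC)
  have hpow : l₁₂ ^ ((p ^ f - 1) / (p - 1)) = (l₁ * P) ^ ((p ^ f - 1) / (p - 1)) :=
    mul_right_cancel₀ hW key3
  have hconst : constantCoeff (l₁ * P) = 1 := by
    rw [map_mul, hl₁0, hP_def, constantCoeff_pcomp, hl₂0, one_mul]
  exact pow_root_inj hqF' hl₁₂0 hconst hpow
end
end

section
/- Let p be an odd prime and F a field of characteristic p. Let η ∈ ℤ_p^× be a unit whose reduction mod p generates 𝔽_p^×, acting on F((π)) by η(π) = (1+π)^η − 1. Suppose v ∈ ℤ_{≥0} and g_0(π) ∈ F((π))^× satisfies g_0(π^{p^f})/g_0(π) = (η(π)/(π·η̄))^{(p−1)v}, where η̄ is the mod-p reduction of η. Then g_0(π) = α·λ_η(π)^v for some α ∈ F^×, where λ_η ∈ 1 + πF[[π]] is the unique (p^f−1)/(p−1)-th root of η(π)/(π·η̄) with constant term 1. -/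
noncomputable section

open PowerSeries

namespace St12

def zmh (k : ℕ) : ℤ →+ ℤ where
  toFun n := (k : ℤ) * n
  map_zero' := mul_zero _
  map_add' a b := mul_add _ _ _

def lsubstHom (F : Type) [Field F] (k : ℕ) (hk : 0 < k) : LaurentSeries F →+* LaurentSeries F :=
  HahnSeries.embDomainRingHom (zmh k)
    (fun a b h => by
      have : (k : ℤ) ≠ 0 := by exact_mod_cast hk.ne'
      exact mul_left_cancel₀ this h)
    (fun a b => by
      have : (0 : ℤ) < k := by exact_mod_cast hk
      exact mul_le_mul_iff_right₀ this)

variable (F : Type) [Field F]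

lemma lsubst_eq (k : ℕ) (hk : 0 < k) (x : LaurentSeries F) :
    lsubst F k x = lsubstHom F k hk x := by
  rw [lsubst, dif_pos hk]
  rfl

lemma lsubst_coeff_mul (k : ℕ) (hk : 0 < k) (x : LaurentSeries F) (a : ℤ) :
    (lsubst F k x).coeff ((k : ℤ) * a) = x.coeff a := by
  rw [lsubst, dif_pos hk]
  exact HahnSeries.embDomain_coeff

lemma lsubst_coeff_not_dvd (k : ℕ) (hk : 0 < k) (x : LaurentSeries F) (n : ℤ)
    (h : ¬ (k : ℤ) ∣ n) : (lsubst F k x).coeff n = 0 := by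
  rw [lsubst, dif_pos hk]
  apply HahnSeries.embDomain_notin_range
  rintro ⟨a, rfl⟩
  exact h ⟨a, rfl⟩

lemma lS_coeff_natCast (g : PowerSeries F) (m : ℕ) :
    (lS F g).coeff (m : ℤ) = PowerSeries.coeff m g :=
  HahnSeries.ofPowerSeries_apply_coeff g m

lemma lS_coeff_neg (g : PowerSeries F) (n : ℤ) (hn : n < 0) :
    (lS F g).coeff n = 0 := by
  rw [lS, HahnSeries.ofPowerSeries_apply]
  apply HahnSeries.embDomain_notin_range
  rintro ⟨a, ha⟩
  have ha' : (a : ℤ) = n := ha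
  omega

lemma lsubst_lS (k : ℕ) (hk : 0 < k) (g : PowerSeries F) :
    lsubst F k (lS F g) = lS F (psubst F k g) := by
  apply HahnSeries.coeff_injective
  funext n
  rcases lt_or_ge n 0 with hn | hn
  · rw [lS_coeff_neg F _ n hn]
    by_cases h : (k : ℤ) ∣ n
    · obtain ⟨a, rfl⟩ := h
      rw [lsubst_coeff_mul F k hk _ a]
      apply lS_coeff_neg
      rcases lt_or_ge a 0 with h' | h'
      · exact h'
      · exfalso; nlinarith [Int.natCast_pos.mpr hk]
    · exact lsubst_coeff_not_dvd F k hk _ n h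
  · obtain ⟨m, rfl⟩ : ∃ m : ℕ, n = (m : ℤ) := ⟨n.toNat, (Int.toNat_of_nonneg hn).symm⟩
    rw [lS_coeff_natCast, psubst, PowerSeries.coeff_mk]
    by_cases h : k ∣ m
    · obtain ⟨b, rfl⟩ := h
      have hcast : ((k * b : ℕ) : ℤ) = (k : ℤ) * (b : ℤ) := by push_cast; ring
      rw [hcast, lsubst_coeff_mul F k hk _ b, lS_coeff_natCast,
        if_pos ⟨b, rfl⟩, Nat.mul_div_cancel_left b hk]
    · rw [if_neg h]
      apply lsubst_coeff_not_dvd F k hk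
      rintro ⟨c, hc⟩
      rcases lt_or_ge c 0 with h' | h'
      · nlinarith [Int.natCast_pos.mpr hk, Int.natCast_nonneg m]
      · obtain ⟨c', rfl⟩ : ∃ c' : ℕ, c = (c' : ℤ) := ⟨c.toNat, (Int.toNat_of_nonneg h').symm⟩
        exact h ⟨c', by exact_mod_cast hc⟩

lemma charP_ps (p : ℕ) [CharP F p] : CharP (PowerSeries F) p :=
  ⟨fun n => by
    rw [← map_natCast (PowerSeries.C) n, ← map_zero (PowerSeries.C),
      (PowerSeries.C_injective).eq_iff, CharP.cast_eq_zero_iff F p]⟩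

lemma pow_p_eq_psubst (p : ℕ) [Fact p.Prime] [CharP F p] (g : PowerSeries F)
    (hg : ∀ n, (PowerSeries.coeff n g) ^ p = PowerSeries.coeff n g) :
    g ^ p = psubst F p g := by
  haveI := charP_ps F p
  have hp : 0 < p := (Fact.out : p.Prime).pos
  ext n
  set P : Polynomial F := PowerSeries.trunc (n + 1) g with hP
  have hdvd : (PowerSeries.X : PowerSeries F) ^ (n + 1) ∣ (g - (P : PowerSeries F)) := by
    rw [PowerSeries.X_pow_dvd_iff]
    intro m hm
    simp [hP, PowerSeries.coeff_trunc, hm, Polynomial.coeff_coe]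
  obtain ⟨d, hd⟩ := hdvd
  have hgP : g = (P : PowerSeries F) + PowerSeries.X ^ (n + 1) * d := by
    rw [← hd]; ring
  have hpow : g ^ p = (P : PowerSeries F) ^ p + (PowerSeries.X ^ (n + 1) * d) ^ p := by
    rw [hgP, add_pow_char]
  have hc2 : PowerSeries.coeff n ((PowerSeries.X ^ (n + 1) * d) ^ p) = 0 := by
    have hdd : (PowerSeries.X : PowerSeries F) ^ (n + 1) ∣ (PowerSeries.X ^ (n + 1) * d) ^ p :=
      Dvd.dvd.trans (dvd_mul_right _ d) (dvd_pow_self _ (by omega))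
    rw [PowerSeries.X_pow_dvd_iff] at hdd
    exact hdd n (by omega)
  have hPp : (P : PowerSeries F) ^ p = ((P ^ p : Polynomial F) : PowerSeries F) := by
    push_cast; ring
  rw [hpow, map_add, hc2, add_zero, hPp, Polynomial.coeff_coe,
    ← Polynomial.map_frobenius_expand p P, Polynomial.coeff_map, Polynomial.coeff_expand hp]
  rw [psubst, PowerSeries.coeff_mk]
  split_ifs with h
  · have hlt : n / p < n + 1 := Nat.lt_succ_of_le (Nat.div_le_self n p)
    rw [frobenius_def, hP, PowerSeries.coeff_trunc, if_pos hlt, hg]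
  · rw [map_zero]

lemma psubst_coeff (k : ℕ) (g : PowerSeries F) (n : ℕ) :
    PowerSeries.coeff n (psubst F k g) =
      if k ∣ n then PowerSeries.coeff (n / k) g else 0 := by
  rw [psubst, PowerSeries.coeff_mk]

lemma psubst_one (g : PowerSeries F) : psubst F 1 g = g := by
  ext n; simp [psubst_coeff]

lemma psubst_psubst (a b : ℕ) (ha : 0 < a) (hb : 0 < b) (g : PowerSeries F) :
    psubst F a (psubst F b g) = psubst F (b * a) g := by
  ext n
  simp only [psubst_coeff]
  by_cases h : a ∣ n
  · obtain ⟨c, rfl⟩ := h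
    rw [if_pos ⟨c, rfl⟩, Nat.mul_div_cancel_left c ha]
    by_cases h' : b ∣ c
    · obtain ⟨e, rfl⟩ := h'
      split_ifs with h1 h2 h2
      · rw [Nat.mul_div_cancel_left e hb, show a * (b * e) = (b * a) * e by ring,
          Nat.mul_div_cancel_left e (by positivity)]
      · exact absurd ⟨e, by ring⟩ h2
      · exact absurd ⟨e, rfl⟩ h1
      · exact absurd ⟨e, rfl⟩ h1
    · rw [if_neg h', if_neg]
      rintro ⟨e, he⟩
      exact h' ⟨e, Nat.eq_of_mul_eq_mul_left ha (by rw [he]; ring)⟩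
  · rw [if_neg h, if_neg]
    rintro ⟨e, he⟩
    exact h ⟨b * e, by rw [he]; ring⟩

lemma pow_q_eq_psubst (p : ℕ) [Fact p.Prime] [CharP F p] (f : ℕ) (g : PowerSeries F)
    (hg : ∀ n, (PowerSeries.coeff n g) ^ p = PowerSeries.coeff n g) :
    g ^ (p ^ f) = psubst F (p ^ f) g := by
  have hp : 0 < p := (Fact.out : p.Prime).pos
  induction f with
  | zero => simp [psubst_one]
  | succ e ih =>
    have h1 : g ^ (p ^ (e + 1)) = (g ^ (p ^ e)) ^ p := by
      rw [← pow_mul, pow_succ]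
    rw [h1, ih, pow_p_eq_psubst F p _ ?_, psubst_psubst F p (p ^ e) hp (by positivity),
      pow_succ]
    intro n
    rw [psubst_coeff]
    split_ifs with h
    · exact hg _
    · exact zero_pow (Fact.out : p.Prime).ne_zero

lemma eq_one_of_pow_eq_one (p : ℕ) [Fact p.Prime] [CharP F p]
    (G : PowerSeries F) (hC : PowerSeries.constantCoeff G = 1)
    (m : ℕ) (hm : m ≠ 0) (h : G ^ m = 1) : G = 1 := by
  haveI := charP_ps F p
  by_contra hne
  set x : PowerSeries F := G - 1 with hx
  have hx0 : x ≠ 0 := sub_ne_zero.mpr hne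
  have hxc : PowerSeries.constantCoeff x = 0 := by simp [hx, hC]
  obtain ⟨a, m', hpm', rfl⟩ := Nat.exists_eq_pow_mul_and_not_dvd hm p
    (Fact.out : p.Prime).ne_one
  set y : PowerSeries F := x ^ (p ^ a) with hy
  have hy0 : y ≠ 0 := pow_ne_zero _ hx0
  have hyc : PowerSeries.constantCoeff y = 0 := by
    rw [hy, map_pow, hxc, zero_pow (pow_ne_zero a (Fact.out : p.Prime).ne_zero)]
  have hCy : (1 + y) ^ m' = 1 := by
    have hG : G = 1 + x := by rw [hx]; ring
    calc (1 + y) ^ m' = ((1 + x) ^ (p ^ a)) ^ m' := by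
          rw [hy, add_pow_char_pow, one_pow]
      _ = G ^ (p ^ a * m') := by rw [← hG, ← pow_mul]
      _ = 1 := h
  have hex : ∃ n, PowerSeries.coeff n y ≠ 0 := by
    by_contra hall
    push_neg at hall
    exact hy0 (PowerSeries.ext fun n => by rw [hall n, map_zero])
  classical
  set n₀ := Nat.find hex with hn₀def
  have hn₀ : PowerSeries.coeff n₀ y ≠ 0 := Nat.find_spec hex
  have hlow : ∀ k < n₀, PowerSeries.coeff k y = 0 := fun k hk =>
    not_not.mp (Nat.find_min hex hk)
  have hn₀pos : 0 < n₀ := by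
    rcases Nat.eq_zero_or_pos n₀ with h0 | h0
    · exfalso; apply hn₀; rw [h0, PowerSeries.coeff_zero_eq_constantCoeff_apply, hyc]
    · exact h0
  have hm'pos : 0 < m' := Nat.pos_of_ne_zero (by rintro rfl; simp at hm)
  have hexp : (1 + y) ^ m' =
      ∑ i ∈ Finset.range (m' + 1), y ^ i * ((m'.choose i : F⟦X⟧)) := by
    rw [show (1 : F⟦X⟧) + y = y + 1 by ring, add_pow]
    simp
  have hvanish : ∀ i ∈ Finset.range (m' + 1), i ≠ 1 →
      PowerSeries.coeff n₀ (y ^ i * ((m'.choose i : F⟦X⟧))) = 0 := by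
    intro i _ hi1
    rcases Nat.eq_zero_or_pos i with rfl | hipos
    · rw [pow_zero, one_mul, ← map_natCast (PowerSeries.C), PowerSeries.coeff_C,
        if_neg (by omega)]
    · have hi2 : 2 ≤ i := by omega
      have hdvd : (PowerSeries.X : F⟦X⟧) ^ (n₀ + 1) ∣ y ^ i * ((m'.choose i : F⟦X⟧)) := by
        have h1 : (PowerSeries.X : F⟦X⟧) ^ n₀ ∣ y := by
          rw [PowerSeries.X_pow_dvd_iff]; exact hlow
        have h2 : (PowerSeries.X : F⟦X⟧) ^ (n₀ * i) ∣ y ^ i := by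
          rw [pow_mul]; exact pow_dvd_pow_of_dvd h1 i
        exact dvd_trans (pow_dvd_pow _ (by nlinarith)) (h2.mul_right _)
      rw [PowerSeries.X_pow_dvd_iff] at hdvd
      exact hdvd n₀ (by omega)
  have hone : PowerSeries.coeff n₀ ((1 + y) ^ m') = (m' : F) * PowerSeries.coeff n₀ y := by
    rw [hexp, map_sum, Finset.sum_eq_single 1 hvanish
      (fun h1 => absurd (Finset.mem_range.mpr (by omega)) h1)]
    rw [pow_one, ← map_natCast (PowerSeries.C), PowerSeries.coeff_mul_C, Nat.choose_one_right,
      mul_comm]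
  rw [hCy] at hone
  have hzero : PowerSeries.coeff n₀ (1 : F⟦X⟧) = 0 := by
    rw [PowerSeries.coeff_one, if_neg (by omega)]
  rw [hzero] at hone
  have hm'F : (m' : F) ≠ 0 := by
    rw [Ne, CharP.cast_eq_zero_iff F p]
    exact hpm'
  exact hn₀ ((mul_eq_zero.mp hone.symm).resolve_left hm'F)

lemma pow_eq_pow (p : ℕ) [Fact p.Prime] [CharP F p]
    (A B : PowerSeries F) (hA : PowerSeries.constantCoeff A = 1)
    (hB : PowerSeries.constantCoeff B = 1)
    (m : ℕ) (hm : m ≠ 0) (h : A ^ m = B ^ m) : A = B := by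
  have hBu : IsUnit B := PowerSeries.isUnit_iff_constantCoeff.mpr (by rw [hB]; exact isUnit_one)
  obtain ⟨u, rfl⟩ := hBu
  have hinv : PowerSeries.constantCoeff (↑u⁻¹ : PowerSeries F) = 1 := by
    have h1 : (↑u⁻¹ : PowerSeries F) * ↑u = 1 := u.inv_mul
    have h2 := congrArg (PowerSeries.constantCoeff) h1
    rw [map_mul, hB, mul_one, map_one] at h2
    exact h2
  have hG : (A * ↑u⁻¹) ^ m = 1 := by
    rw [mul_pow, h, ← Units.val_pow_eq_pow_val, ← Units.val_pow_eq_pow_val, ← Units.val_mul,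
      ← mul_pow, mul_inv_cancel, one_pow, Units.val_one]
  have hGc : PowerSeries.constantCoeff (A * (↑u⁻¹ : PowerSeries F)) = 1 := by
    rw [map_mul, hA, one_mul, hinv]
  have := eq_one_of_pow_eq_one F p (A * ↑u⁻¹) hGc m hm hG
  calc A = A * (↑u⁻¹ * ↑u) := by rw [u.inv_mul, mul_one]
    _ = (A * ↑u⁻¹) * ↑u := by ring
    _ = ↑u := by rw [this, one_mul]

end St12

open St12 in
/-- solutions of `g₀(π^{p^f})/g₀(π) = (η(π)/(π·η̄))^{(p-1)v}` are
`α·λ_η(π)^v`. -/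
theorem stmt_12 (p : ℕ) [Fact p.Prime] (hp2 : 2 < p) (F : Type) [Field F] [CharP F p]
    (f : ℕ) (hf : 1 ≤ f) (η : PadicInt p) (hη : IsUnit η)
    (hgen : orderOf (PadicInt.toZMod η) = p - 1)
    (lam : PowerSeries F)
    (hlam0 : PowerSeries.constantCoeff lam = 1)
    (hlam : lam ^ ((p ^ f - 1) / (p - 1)) * (PowerSeries.C (redF F p η) * PowerSeries.X)
      = binomSeries F p η - 1)
    (v : ℕ) (g₀ : LaurentSeries F) (hg₀ : g₀ ≠ 0)
    (heq : lsubst F (p ^ f) g₀ * (HahnSeries.C (redF F p η) * T F 1) ^ ((p - 1) * v)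
      = g₀ * lS F (binomSeries F p η - 1) ^ ((p - 1) * v)) :
    ∃ α : F, α ≠ 0 ∧ g₀ = HahnSeries.C α * lS F lam ^ v := by
  classical
  have hp : p.Prime := Fact.out
  set q := p ^ f with hqdef
  have hq2 : 2 ≤ q := le_trans (by omega) (Nat.le_self_pow (by omega) p)
  have hq0 : 0 < q := by omega
  set η' := redF F p η with hη'def
  -- η' is nonzero and fixed by Frobenius
  have hz : (PadicInt.toZMod η) ≠ 0 := by
    intro h0
    rw [h0] at hgen
    have h1 := pow_orderOf_eq_one (0 : ZMod p)
    rw [hgen, zero_pow (by omega : p - 1 ≠ 0)] at h1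
    exact zero_ne_one h1
  have hη'0 : η' ≠ 0 := by
    rw [hη'def, redF]
    intro h0
    exact hz ((ZMod.castHom (dvd_refl p) F).injective (by rw [h0, map_zero]))
  have hη'p : η' ^ p = η' := by
    rw [hη'def, redF, ← map_pow, ZMod.pow_card]
  have natF : ∀ N : ℕ, ((N : F)) ^ p = (N : F) := fun N => by
    have h1 : ((N : F)) = ZMod.castHom (dvd_refl p) F (N : ZMod p) := by rw [map_natCast]
    rw [h1, ← map_pow, ZMod.pow_card]
  set b := binomSeries F p η - 1 with hbdef
  have hb : ∀ n, (PowerSeries.coeff n b) ^ p = PowerSeries.coeff n b := by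
    intro n
    rw [hbdef, map_sub, binomSeries, PowerSeries.coeff_mk, PowerSeries.coeff_one]
    rcases Nat.eq_zero_or_pos n with rfl | hn
    · rw [if_pos rfl, Nat.choose_zero_right, Nat.cast_one, sub_self, zero_pow hp.ne_zero]
    · rw [if_neg (by omega), sub_zero]
      exact natF _
  have hmapb : PowerSeries.map (frobenius F p) b = b := by
    ext n
    rw [PowerSeries.coeff_map, frobenius_def, hb]
  set m := (p ^ f - 1) / (p - 1) with hmdef
  have hdvd : (p - 1) ∣ (p ^ f - 1) := by
    have h1 := Nat.sub_dvd_pow_sub_pow p 1 f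
    simpa using h1
  have hmmul : m * (p - 1) = q - 1 := by
    rw [hmdef, Nat.div_mul_cancel hdvd]
  have hm0 : m ≠ 0 := by
    intro h0; rw [h0, zero_mul] at hmmul; omega
  -- Frobenius fixes lam
  have hCX : (PowerSeries.C η' * PowerSeries.X : PowerSeries F) ≠ 0 :=
    mul_ne_zero
      (fun hc => hη'0 (by
        have := congrArg (PowerSeries.constantCoeff) hc
        rwa [PowerSeries.constantCoeff_C, map_zero] at this))
      PowerSeries.X_ne_zero
  have hfrob_lam : PowerSeries.map (frobenius F p) lam = lam := by
    have h1 := congrArg (PowerSeries.map (frobenius F p)) hlam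
    rw [map_mul, map_pow, map_mul, PowerSeries.map_C, PowerSeries.map_X, hmapb,
      frobenius_def, hη'p] at h1
    have h2 : (PowerSeries.map (frobenius F p) lam) ^ m * (PowerSeries.C η' * PowerSeries.X)
        = lam ^ m * (PowerSeries.C η' * PowerSeries.X) := by rw [h1, hlam]
    have h3 := mul_right_cancel₀ hCX h2
    have hc : PowerSeries.constantCoeff (PowerSeries.map (frobenius F p) lam) = 1 := by
      rw [← PowerSeries.coeff_zero_eq_constantCoeff_apply, PowerSeries.coeff_map,
        PowerSeries.coeff_zero_eq_constantCoeff_apply, hlam0, map_one]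
    exact pow_eq_pow F p _ lam hc hlam0 m hm0 h3
  have hlamfix : ∀ n, (PowerSeries.coeff n lam) ^ p = PowerSeries.coeff n lam := by
    intro n
    have h1 := congrArg (PowerSeries.coeff n) hfrob_lam
    rwa [PowerSeries.coeff_map, frobenius_def] at h1
  have key : lam ^ q = psubst F q lam := pow_q_eq_psubst F p f lam hlamfix
  have hlamne : lam ≠ 0 := fun h0 => one_ne_zero (α := F) (by rw [← hlam0, h0, map_zero])
  have hL0 : lS F lam ≠ 0 := fun h0 =>
    hlamne (HahnSeries.ofPowerSeries_injective (h0.trans (map_zero _).symm))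
  have hLq : lsubst F q (lS F lam) = (lS F lam) ^ q := by
    rw [lsubst_lS F q hq0 lam, ← key, map_pow]
  set L := lS F lam with hLdef
  have hlSb : lS F b = L ^ m * (HahnSeries.C η' * T F 1) := by
    rw [← hlam, map_mul, map_pow, map_mul,
      show (lS F) (PowerSeries.C η') = HahnSeries.C η' from HahnSeries.ofPowerSeries_C η',
      show (lS F) PowerSeries.X = HahnSeries.single (1 : ℤ) 1 from HahnSeries.ofPowerSeries_X]
    rfl
  set U := (HahnSeries.C η' * T F 1) ^ ((p - 1) * v) with hUdef
  have hT0 : T F 1 ≠ 0 := HahnSeries.single_ne_zero one_ne_zero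
  have hC0 : (HahnSeries.C η' : LaurentSeries F) ≠ 0 := by
    rw [HahnSeries.C_apply]
    exact HahnSeries.single_ne_zero hη'0
  have hU0 : U ≠ 0 := pow_ne_zero _ (mul_ne_zero hC0 hT0)
  have star : lsubst F q g₀ = g₀ * L ^ ((q - 1) * v) := by
    apply mul_right_cancel₀ hU0
    calc lsubst F q g₀ * U = g₀ * lS F b ^ ((p - 1) * v) := heq
      _ = g₀ * L ^ ((q - 1) * v) * U := by
          rw [hlSb, mul_pow, ← pow_mul,
            show m * ((p - 1) * v) = (q - 1) * v by rw [← mul_assoc, hmmul], hUdef]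
          ring
  have hLv0 : L ^ v ≠ 0 := pow_ne_zero _ hL0
  set hh := g₀ * (L ^ v)⁻¹ with hhdef
  have hg0h : g₀ = hh * L ^ v := by
    rw [hhdef, mul_assoc, inv_mul_cancel₀ hLv0, mul_one]
  have hsub : lsubst F q hh = hh := by
    have hqsplit : q * v = (q - 1) * v + v := by
      have hq' : q = (q - 1) + 1 := by omega
      calc q * v = ((q - 1) + 1) * v := by rw [← hq']
        _ = (q - 1) * v + v := by ring
    rw [hhdef, lsubst_eq F q hq0, map_mul, map_inv₀, map_pow]
    simp only [← lsubst_eq F q hq0]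
    rw [star, hLq, ← pow_mul, hqsplit, pow_add]
    field_simp
  have hcoeffs : ∀ n : ℤ, n ≠ 0 → hh.coeff n = 0 := by
    have main : ∀ N : ℕ, ∀ n : ℤ, n.natAbs ≤ N → n ≠ 0 → hh.coeff n = 0 := by
      intro N
      induction N with
      | zero => intro n h1 h2; omega
      | succ N ih =>
        intro n h1 h2
        rw [← hsub]
        by_cases hdv : (q : ℤ) ∣ n
        · obtain ⟨a, rfl⟩ := hdv
          rw [lsubst_coeff_mul F q hq0 hh a]
          have ha0 : a ≠ 0 := by rintro rfl; simp at h2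
          apply ih
          · have h3 : ((q : ℤ) * a).natAbs = q * a.natAbs := by
              rw [Int.natAbs_mul, Int.natAbs_natCast]
            have h4 : 1 ≤ a.natAbs := by
              rcases Nat.eq_zero_or_pos a.natAbs with h5 | h5
              · exact absurd (Int.natAbs_eq_zero.mp h5) ha0
              · exact h5
            have h6 : 2 * a.natAbs ≤ q * a.natAbs := Nat.mul_le_mul_right _ (by omega)
            omega
          · exact ha0
        · exact lsubst_coeff_not_dvd F q hq0 hh n hdv
    exact fun n hn => main n.natAbs n le_rfl hn
  set α := hh.coeff 0 with hαdef
  have hhC : hh = HahnSeries.C α := by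
    apply HahnSeries.coeff_injective
    funext n
    by_cases hn : n = 0
    · subst hn
      rw [HahnSeries.C_apply, HahnSeries.coeff_single_same, hαdef]
    · rw [hcoeffs n hn, HahnSeries.C_apply, HahnSeries.coeff_single, if_neg hn]
  have hh0 : hh ≠ 0 := by
    intro h0; apply hg₀; rw [hg0h, h0, zero_mul]
  refine ⟨α, ?_, ?_⟩
  · intro h0; apply hh0; rw [hhC, h0, map_zero]
  · rw [hg0h, hhC]
end
end

section
/- Let p = 2, f ≥ 2, and let c = (c_0,…,c_{f−1}) ∈ {0,1}^{ℤ/fℤ}. Suppose c_i = 1, and r ∈ {0,…,f−1} is such that c_{i+1} = … = c_{i+r} = 0 and c_{i+r+1} = 1 (indices mod f). Set Σ_i = Σ_{k=0}^{f−1} c_{i+k} 2^k. Then Σ_i ≡ 1 + 2^{r+1} mod 2^{r+2} if r < f−1, and Σ_i = 1 if r = f−1; in either case Σ_i + (2^f−1)(1−2^{r+2}) ≡ 2^{r+1} mod 2^{r+2}. -/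
noncomputable section

open PowerSeries

/-- arithmetic of `Σ_i` for `p = 2`. -/
theorem stmt_15 (f : ℕ) (hf : 2 ≤ f) (c : ZMod f → ℕ) (hc : ∀ i, c i ≤ 1)
    (i : ZMod f) (hci : c i = 1) (r : ℕ) (hr : r ≤ f - 1)
    (h0 : ∀ k : ℕ, 1 ≤ k → k ≤ r → c (i + (k : ZMod f)) = 0)
    (h1 : c (i + ((r + 1 : ℕ) : ZMod f)) = 1) :
    (r < f - 1 →
      (∑ k ∈ Finset.range f, c (i + (k : ZMod f)) * 2 ^ k) ≡ 1 + 2 ^ (r + 1) [MOD 2 ^ (r + 2)]) ∧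
    (r = f - 1 → (∑ k ∈ Finset.range f, c (i + (k : ZMod f)) * 2 ^ k) = 1) ∧
    (((∑ k ∈ Finset.range f, c (i + (k : ZMod f)) * 2 ^ k : ℕ) : ℤ)
        + ((2 : ℤ) ^ f - 1) * (1 - (2 : ℤ) ^ (r + 2))
      ≡ (2 : ℤ) ^ (r + 1) [ZMOD (2 : ℤ) ^ (r + 2)]) := by
  set g : ℕ → ℕ := fun k => c (i + (k : ZMod f)) * 2 ^ k with hg
  have hg0 : g 0 = 1 := by simp [hg, hci]
  have hgz : ∀ k ∈ Finset.Ico 1 (r + 1), g k = 0 := by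
    intro k hk
    rw [Finset.mem_Ico] at hk
    simp [hg, h0 k hk.1 (by omega)]
  have key1 : r + 2 ≤ f →
      (∑ k ∈ Finset.range f, g k) ≡ 1 + 2 ^ (r + 1) [MOD 2 ^ (r + 2)] := by
    intro h
    have hsplit : (∑ k ∈ Finset.range f, g k)
        = (∑ k ∈ Finset.range (r + 2), g k) + ∑ k ∈ Finset.Ico (r + 2) f, g k := by
      rw [Finset.sum_range_add_sum_Ico _ h]
    have hfirst : (∑ k ∈ Finset.range (r + 2), g k) = 1 + 2 ^ (r + 1) := by
      rw [Finset.sum_range_succ, ← Finset.sum_range_add_sum_Ico g (by omega : 1 ≤ r + 1),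
        Finset.sum_eq_zero hgz]
      have h1' : c (i + ((r : ZMod f) + 1)) = 1 := by push_cast at h1; exact h1
      simp [hg, hci, h1']
    have hdvd : 2 ^ (r + 2) ∣ ∑ k ∈ Finset.Ico (r + 2) f, g k := by
      refine Finset.dvd_sum fun k hk => ?_
      rw [Finset.mem_Ico] at hk
      exact dvd_mul_of_dvd_right (pow_dvd_pow 2 hk.1) _
    rw [hsplit, hfirst]
    calc (1 + 2 ^ (r + 1)) + ∑ k ∈ Finset.Ico (r + 2) f, g k
        ≡ (1 + 2 ^ (r + 1)) + 0 [MOD 2 ^ (r + 2)] :=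
          Nat.ModEq.add_left _ ((Nat.modEq_zero_iff_dvd).mpr hdvd)
      _ = 1 + 2 ^ (r + 1) := by ring
  have key2 : r = f - 1 → (∑ k ∈ Finset.range f, g k) = 1 := by
    intro h
    have hzero : ∑ k ∈ Finset.Ico 1 f, g k = 0 := by
      refine Finset.sum_eq_zero fun k hk => ?_
      rw [Finset.mem_Ico] at hk
      exact hgz k (Finset.mem_Ico.mpr ⟨hk.1, by omega⟩)
    rw [← Finset.sum_range_add_sum_Ico g (by omega : 1 ≤ f), hzero, Finset.sum_range_one, hg0]
  refine ⟨fun h => key1 (by omega), key2, ?_⟩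
  rcases eq_or_lt_of_le hr with heq | hlt
  · rw [key2 heq]
    have hf1 : f = r + 1 := by omega
    subst hf1
    exact (Int.modEq_iff_dvd.mpr ⟨2 ^ (r + 1) - 1, by ring⟩)
  · have h : r + 2 ≤ f := by omega
    have hS : ((∑ k ∈ Finset.range f, g k : ℕ) : ℤ)
        ≡ ((1 + 2 ^ (r + 1) : ℕ) : ℤ) [ZMOD ((2 ^ (r + 2) : ℕ) : ℤ)] :=
      Int.natCast_modEq_iff.mpr (key1 h)
    have hS' : ((∑ k ∈ Finset.range f, g k : ℕ) : ℤ)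
        ≡ 1 + 2 ^ (r + 1) [ZMOD (2 : ℤ) ^ (r + 2)] := by
      exact_mod_cast hS
    obtain ⟨m, hm⟩ : ∃ m, f = r + 2 + m := ⟨f - (r + 2), by omega⟩
    subst hm
    have hprod : ((2 : ℤ) ^ (r + 2 + m) - 1) * (1 - (2 : ℤ) ^ (r + 2))
        ≡ -1 [ZMOD (2 : ℤ) ^ (r + 2)] :=
      Int.modEq_iff_dvd.mpr ⟨2 ^ (r + 2 + m) - 2 ^ m - 1, by ring⟩
    have := hS'.add hprod
    calc ((∑ k ∈ Finset.range (r + 2 + m), g k : ℕ) : ℤ)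
          + ((2 : ℤ) ^ (r + 2 + m) - 1) * (1 - (2 : ℤ) ^ (r + 2))
        ≡ 1 + 2 ^ (r + 1) + (-1) [ZMOD (2 : ℤ) ^ (r + 2)] := this
      _ = 2 ^ (r + 1) := by ring
end
end
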